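/- arXiv:2407.20954 — 6 statements merged into one kernel-verified Lean document; each statement's English description precedes it below -/
import Mathlib

section
/- Let (M_ℓ)_{ℓ≥0} be a sequence of positive reals and suppose there exists ℓ₀ ∈ ℕ with M_{ℓ₀}/ℓ₀! ≤ 1/2. Let f ∈ C^∞([0,1]) satisfy sup_{[0,1]} |f^{(ℓ)}| ≤ M_ℓ · sup_{[0,1]} |f| for all ℓ ≥ 0. Then for any set E ⊆ [0,1] with γ_{ℓ₀}(E) > 0, one has sup_{[0,1]} |f| ≤ (4 ℓ₀ / γ_{ℓ₀}(E)) · sup_E |f|. -/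
open Set Finset

lemma polyContDiff (p : Polynomial ℝ) : ContDiff ℝ (⊤ : ℕ∞) fun x : ℝ => p.eval x := by
  induction p using Polynomial.induction_on' with
  | add p q hp hq => simpa [Polynomial.eval_add] using hp.add hq
  | monomial k a =>
      simpa [Polynomial.eval_monomial] using contDiff_const.mul (contDiff_id.pow k)

lemma polyIterDeriv (n : ℕ) : ∀ (p : Polynomial ℝ), ∀ x ∈ Icc (0:ℝ) 1,
    iteratedDerivWithin n (fun y => p.eval y) (Icc (0:ℝ) 1) x
      = (Polynomial.derivative^[n] p).eval x := by
  have hu : UniqueDiffOn ℝ (Icc (0:ℝ) 1) := uniqueDiffOn_Icc one_pos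
  induction n with
  | zero => intro p x hx; simp
  | succ n ih =>
      intro p x hx
      rw [iteratedDerivWithin_succ']
      have heq : EqOn (derivWithin (fun y => p.eval y) (Icc (0:ℝ) 1))
          (fun y => p.derivative.eval y) (Icc (0:ℝ) 1) := fun y hy =>
        Polynomial.derivWithin p (hu.uniqueDiffWithinAt hy)
      rw [iteratedDerivWithin_congr heq hx, ih p.derivative x hx,
        ← Function.iterate_succ_apply]

lemma iterRolle : ∀ (m : ℕ) (g : ℝ → ℝ), ContDiffOn ℝ (⊤ : ℕ∞) g (Icc (0:ℝ) 1) →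
    ∀ (τ : Fin (m+1) → ℝ), StrictMono τ → (∀ i, τ i ∈ Icc (0:ℝ) 1) → (∀ i, g (τ i) = 0) →
    ∃ ξ ∈ Icc (0:ℝ) 1, iteratedDerivWithin m g (Icc (0:ℝ) 1) ξ = 0 := by
  have hu : UniqueDiffOn ℝ (Icc (0:ℝ) 1) := uniqueDiffOn_Icc one_pos
  intro m
  induction m with
  | zero => intro g hg τ hτ hmem hz; exact ⟨τ 0, hmem 0, by simpa using hz 0⟩
  | succ m ih =>
      intro g hg τ hτ hmem hz
      set h := derivWithin g (Icc (0:ℝ) 1) with hh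
      have hgd : DifferentiableOn ℝ g (Icc (0:ℝ) 1) :=
        hg.differentiableOn (by simp)
      have key : ∀ i : Fin (m+1), ∃ s ∈ Ioo (τ i.castSucc) (τ i.succ), h s = 0 := by
        intro i
        have hab : τ i.castSucc < τ i.succ := hτ (by simp [Fin.lt_def])
        have hsub : Icc (τ i.castSucc) (τ i.succ) ⊆ Icc (0:ℝ) 1 :=
          Icc_subset_Icc (hmem i.castSucc).1 (hmem i.succ).2
        have hione : Ioo (τ i.castSucc) (τ i.succ) ⊆ Ioo (0:ℝ) 1 :=
          Ioo_subset_Ioo (hmem i.castSucc).1 (hmem i.succ).2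
        refine exists_hasDerivAt_eq_zero hab (hg.continuousOn.mono hsub)
          (by rw [hz i.castSucc, hz i.succ]) ?_
        intro y hy
        have hy01 : y ∈ Ioo (0:ℝ) 1 := hione hy
        have hyI : y ∈ Icc (0:ℝ) 1 := Ioo_subset_Icc_self hy01
        have hnhds : Icc (0:ℝ) 1 ∈ nhds y := Icc_mem_nhds hy01.1 hy01.2
        exact ((hgd y hyI).hasDerivWithinAt).hasDerivAt hnhds
      choose σ hσI hσ0 using key
      have hσmono : StrictMono σ := by
        intro i j hij
        calc σ i < τ i.succ := (hσI i).2
        _ ≤ τ j.castSucc := hτ.monotone (by simp [Fin.le_def]; omega)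
        _ < σ j := (hσI j).1
      have hσmem : ∀ i, σ i ∈ Icc (0:ℝ) 1 := fun i =>
        Icc_subset_Icc (hmem i.castSucc).1 (hmem i.succ).2 (Ioo_subset_Icc_self (hσI i))
      have hh' : ContDiffOn ℝ (⊤ : ℕ∞) h (Icc (0:ℝ) 1) := hg.derivWithin hu (by simp)
      obtain ⟨ξ, hξ, hξ0⟩ := ih h hh' σ hσmono hσmem hσ0
      exact ⟨ξ, hξ, by rw [iteratedDerivWithin_succ']; exact hξ0⟩


/-- `γ_k(E)`: the supremum over `k`-tuples of points of `E` of `min_i ∏_{j≠i} |xᵢ - xⱼ|`. -/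
noncomputable def gammaK (k : ℕ) (E : Set ℝ) : ℝ :=
  ⨆ x : { x : Fin k → ℝ // ∀ i, x i ∈ E },
    ⨅ i : Fin k, ∏ j ∈ Finset.univ.erase i, |x.1 i - x.1 j|

/-- Remez-type inequality: if `f` is smooth on `[0,1]` with derivative bounds
`sup |f^{(ℓ)}| ≤ M_ℓ sup |f|`, the `M_ℓ` are positive and `M_{ℓ₀}/ℓ₀! ≤ 1/2` for some `ℓ₀`,
then for every `E ⊆ [0,1]` (with `γ_{ℓ₀}(E) > 0`),
`sup_{[0,1]} |f| ≤ (4ℓ₀/γ_{ℓ₀}(E)) · sup_E |f|`. -/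
theorem remez_type_inequality
    (M : ℕ → ℝ) (hM : ∀ ℓ, 0 < M ℓ)
    (ℓ₀ : ℕ) (hℓ₀ : M ℓ₀ / (Nat.factorial ℓ₀ : ℝ) ≤ 1/2)
    (f : ℝ → ℝ) (hf : ContDiffOn ℝ (⊤ : ℕ∞) f (Icc (0:ℝ) 1))
    (hder : ∀ ℓ : ℕ, ∀ x ∈ Icc (0:ℝ) 1,
      |iteratedDerivWithin ℓ f (Icc (0:ℝ) 1) x| ≤ M ℓ * ⨆ y : Icc (0:ℝ) 1, |f y|)
    (E : Set ℝ) (hE : E ⊆ Icc 0 1) (hγ : 0 < gammaK ℓ₀ E) :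
    (⨆ y : Icc (0:ℝ) 1, |f y|) ≤ (4 * ℓ₀ / gammaK ℓ₀ E) * ⨆ y : E, |f y| := by
  classical
  have hu : UniqueDiffOn ℝ (Icc (0:ℝ) 1) := uniqueDiffOn_Icc one_pos
  set S : ℝ := ⨆ y : Icc (0:ℝ) 1, |f y| with hS
  set A : ℝ := ⨆ y : E, |f y| with hA
  set γ : ℝ := gammaK ℓ₀ E with hγdef
  -- boundedness of S
  have hcont : ContinuousOn (fun y => |f y|) (Icc (0:ℝ) 1) := hf.continuousOn.abs
  have bddS : BddAbove (Set.range fun y : Icc (0:ℝ) 1 => |f y|) := by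
    have h := (isCompact_Icc.image_of_continuousOn hcont).bddAbove
    rwa [Set.image_eq_range] at h
  have hle_S : ∀ x ∈ Icc (0:ℝ) 1, |f x| ≤ S := fun x hx => le_ciSup bddS ⟨x, hx⟩
  have hS0 : 0 ≤ S := le_trans (abs_nonneg _) (hle_S 0 (by norm_num))
  -- ℓ₀ ≥ 1
  have hn : 1 ≤ ℓ₀ := by
    rcases Nat.eq_zero_or_pos ℓ₀ with h0 | h; swap; · exact h
    subst h0
    haveI : Nonempty {x : Fin 0 → ℝ // ∀ i, x i ∈ E} := ⟨⟨fun i => i.elim0, fun i => i.elim0⟩⟩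
    have : gammaK 0 E = 0 := by
      rw [gammaK]
      rw [show (fun x : {x : Fin 0 → ℝ // ∀ i, x i ∈ E} =>
          ⨅ i : Fin 0, ∏ j ∈ Finset.univ.erase i, |x.1 i - x.1 j|) = fun _ => (0:ℝ) from
        funext fun x => Real.iInf_of_isEmpty _]
      exact ciSup_const
    rw [hγdef, this] at hγ; exact absurd hγ (lt_irrefl 0)
  haveI : Nonempty (Fin ℓ₀) := ⟨⟨0, hn⟩⟩
  -- index type nonempty
  haveI hne : Nonempty {x : Fin ℓ₀ → ℝ // ∀ i, x i ∈ E} := by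
    by_contra h
    rw [not_nonempty_iff] at h
    have : gammaK ℓ₀ E = 0 := Real.iSup_of_isEmpty _
    rw [hγdef, this] at hγ; exact absurd hγ (lt_irrefl 0)
  -- γ ≤ 1
  have habs1 : ∀ a b : ℝ, a ∈ Icc (0:ℝ) 1 → b ∈ Icc (0:ℝ) 1 → |a - b| ≤ 1 := by
    intro a b ha hb
    rw [abs_sub_le_iff]
    constructor <;> [linarith [ha.1, ha.2, hb.1, hb.2]; linarith [ha.1, ha.2, hb.1, hb.2]]
  have hγ1 : γ ≤ 1 := by
    rw [hγdef, gammaK]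
    refine ciSup_le fun x => ?_
    refine ciInf_le_of_le ((Set.finite_range _).bddBelow) (Classical.arbitrary _) ?_
    refine Finset.prod_le_one (fun j _ => abs_nonneg _) fun j _ => ?_
    exact habs1 _ _ (hE (x.2 _)) (hE (x.2 _))
  -- get a good tuple
  have h2 : γ / 2 < gammaK ℓ₀ E := by rw [← hγdef]; linarith
  obtain ⟨⟨x, hxE⟩, hp⟩ := exists_lt_of_lt_ciSup
    (show γ / 2 < ⨆ x : { x : Fin ℓ₀ → ℝ // ∀ i, x i ∈ E },
      ⨅ i : Fin ℓ₀, ∏ j ∈ Finset.univ.erase i, |x.1 i - x.1 j| from h2)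
  set γ' : ℝ := ⨅ i : Fin ℓ₀, ∏ j ∈ Finset.univ.erase i, |x i - x j| with hγ'def
  have hγ'gt : γ / 2 < γ' := hp
  have hγ'pos : 0 < γ' := lt_trans (by linarith) hγ'gt
  have hγ'le : ∀ i, γ' ≤ ∏ j ∈ Finset.univ.erase i, |x i - x j| := fun i =>
    ciInf_le ((Set.finite_range _).bddBelow) i
  have hprodpos : ∀ i, 0 < ∏ j ∈ Finset.univ.erase i, |x i - x j| := fun i =>
    lt_of_lt_of_le hγ'pos (hγ'le i)
  have hinj : Function.Injective x := by
    intro i j hij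
    by_contra hne
    have hmem : j ∈ Finset.univ.erase i := Finset.mem_erase.2 ⟨fun h => hne h.symm, Finset.mem_univ _⟩
    have : (∏ k ∈ Finset.univ.erase i, |x i - x k|) = 0 :=
      Finset.prod_eq_zero hmem (by rw [hij]; simp)
    exact absurd (hprodpos i) (by rw [this]; exact lt_irrefl 0)
  have hxI : ∀ i, x i ∈ Icc (0:ℝ) 1 := fun i => hE (hxE i)
  -- A facts
  have bddA : BddAbove (Set.range fun y : E => |f y|) := by
    refine ⟨S, ?_⟩; rintro _ ⟨y, rfl⟩; exact hle_S y (hE y.2)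
  have hle_A : ∀ z ∈ E, |f z| ≤ A := fun z hz => le_ciSup bddA ⟨z, hz⟩
  have hA0 : 0 ≤ A := le_trans (abs_nonneg _)
    (hle_A (x (Classical.arbitrary _)) (hxE (Classical.arbitrary _)))
  -- factor ≥ 1
  have hfac : 1 ≤ 4 * (ℓ₀:ℝ) / γ := by
    rw [le_div_iff₀ hγ]
    have : (1:ℝ) ≤ (ℓ₀:ℝ) := by exact_mod_cast hn
    nlinarith
  -- max point
  obtain ⟨z, hzI, hz⟩ := isCompact_Icc.exists_isMaxOn (nonempty_Icc.2 zero_le_one) hcont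
  have hSz : S ≤ |f z| := ciSup_le fun y => hz y.2
  by_cases hcase : ∃ i, z = x i
  · obtain ⟨i, rfl⟩ := hcase
    calc S ≤ |f (x i)| := hSz
    _ ≤ A := hle_A _ (hxE i)
    _ ≤ (4 * ℓ₀ / γ) * A := le_mul_of_one_le_left hA0 hfac
  · push_neg at hcase
    set r : Fin ℓ₀ → ℝ := fun i => f (x i) with hr
    have hinjOn : Set.InjOn x ↑(Finset.univ : Finset (Fin ℓ₀)) := fun a _ b _ h => hinj h
    set p : Polynomial ℝ := Lagrange.interpolate Finset.univ x r with hpdef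
    set W : Polynomial ℝ := Lagrange.nodal Finset.univ x with hWdef
    have hWz : W.eval z = ∏ i, (z - x i) := Lagrange.eval_nodal
    have hWz0 : W.eval z ≠ 0 := by
      rw [hWz]; exact Finset.prod_ne_zero_iff.2 fun i _ => sub_ne_zero.2 (hcase i)
    set c : ℝ := (f z - p.eval z) / W.eval z with hcdef
    set q : Polynomial ℝ := p + Polynomial.C c * W with hqdef
    set g : ℝ → ℝ := f - fun t => q.eval t with hgdef
    have hgs : ContDiffOn ℝ (⊤ : ℕ∞) g (Icc 0 1) := hf.sub (polyContDiff q).contDiffOn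
    have hqx : ∀ i, q.eval (x i) = f (x i) := by
      intro i
      have h1 : p.eval (x i) = r i := by
        rw [hpdef]; exact Lagrange.eval_interpolate_at_node r hinjOn (Finset.mem_univ i)
      have h2 : W.eval (x i) = 0 := by
        rw [hWdef]; exact Lagrange.eval_nodal_at_node (Finset.mem_univ i)
      simp [hqdef, h1, h2, hr]
    have hqz : q.eval z = f z := by
      have : c * W.eval z = f z - p.eval z := by
        rw [hcdef]; exact div_mul_cancel₀ _ hWz0
      simp only [hqdef, Polynomial.eval_add, Polynomial.eval_mul, Polynomial.eval_C]
      rw [this]; ring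
    have hgx : ∀ i, g (x i) = 0 := fun i => by simp [hgdef, hqx i]
    have hgz : g z = 0 := by simp [hgdef, hqz]
    -- the ℓ₀+1 zeros, ordered
    set T : Finset ℝ := insert z (Finset.image x Finset.univ) with hT
    have hznot : z ∉ Finset.image x Finset.univ := by
      simp only [Finset.mem_image, Finset.mem_univ, true_and, not_exists]
      intro i h; exact hcase i h.symm
    have hTcard : T.card = ℓ₀ + 1 := by
      rw [hT, Finset.card_insert_of_notMem hznot,
        Finset.card_image_of_injective _ hinj, Finset.card_univ, Fintype.card_fin]
    set τ : Fin (ℓ₀+1) → ℝ := fun i => ((T.orderIsoOfFin hTcard i : ℝ)) with hτ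
    have hτmono : StrictMono τ := fun i j h =>
      Subtype.coe_lt_coe.2 ((T.orderIsoOfFin hTcard).strictMono h)
    have hτT : ∀ i, τ i ∈ T := fun i => (T.orderIsoOfFin hTcard i).2
    have hmemT : ∀ y ∈ T, y ∈ Icc (0:ℝ) 1 ∧ g y = 0 := by
      intro y hy
      rw [hT, Finset.mem_insert] at hy
      rcases hy with rfl | hy
      · exact ⟨hzI, hgz⟩
      · obtain ⟨i, _, rfl⟩ := Finset.mem_image.1 hy
        exact ⟨hxI i, hgx i⟩
    obtain ⟨ξ, hξI, hξ0⟩ := iterRolle ℓ₀ g hgs τ hτmono (fun i => (hmemT _ (hτT i)).1)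
      (fun i => (hmemT _ (hτT i)).2)
    -- identify the ℓ₀-th derivative of q
    have hsplit : iteratedDerivWithin ℓ₀ g (Icc 0 1) ξ
        = iteratedDerivWithin ℓ₀ f (Icc 0 1) ξ
          - iteratedDerivWithin ℓ₀ (fun t => q.eval t) (Icc 0 1) ξ := by
      rw [hgdef]
      exact iteratedDerivWithin_sub hξI hu ((hf.of_le (by exact_mod_cast le_top)) ξ hξI)
        (((polyContDiff q).contDiffOn.of_le (by exact_mod_cast le_top)) ξ hξI)
    have hpdeg : p.degree < (ℓ₀ : WithBot ℕ) := by
      have := Lagrange.degree_interpolate_lt r hinjOn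
      rw [Finset.card_univ, Fintype.card_fin] at this; exact this
    have hWnat : W.natDegree = ℓ₀ := by
      simp [hWdef, Lagrange.natDegree_nodal]
    have hqcoeff : q.coeff ℓ₀ = c := by
      rw [hqdef, Polynomial.coeff_add, Polynomial.coeff_C_mul,
        Polynomial.coeff_eq_zero_of_degree_lt hpdeg]
      have hW1 : W.coeff ℓ₀ = 1 := by
        rw [← hWnat]; exact Lagrange.nodal_monic.coeff_natDegree
      rw [hW1]; ring
    have hqnat : q.natDegree ≤ ℓ₀ := by
      rw [hqdef]
      refine le_trans (Polynomial.natDegree_add_le _ _) (max_le ?_ ?_)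
      · exact Polynomial.natDegree_le_iff_degree_le.2 (le_of_lt hpdeg)
      · exact le_trans (Polynomial.natDegree_C_mul_le _ _) (le_of_eq hWnat)
    have hiterq : Polynomial.derivative^[ℓ₀] q = Polynomial.C ((ℓ₀.factorial : ℝ) * c) := by
      have hd0 : (Polynomial.derivative^[ℓ₀] q).natDegree ≤ 0 :=
        le_trans (Polynomial.natDegree_iterate_derivative _ _) (by omega)
      rw [Polynomial.eq_C_of_natDegree_le_zero hd0]
      congr 1
      rw [Polynomial.coeff_iterate_derivative]
      simp [Nat.descFactorial_self, nsmul_eq_mul, hqcoeff]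
    have hfiter : iteratedDerivWithin ℓ₀ f (Icc 0 1) ξ = (ℓ₀.factorial : ℝ) * c := by
      have h1 := polyIterDeriv ℓ₀ q ξ hξI
      rw [hiterq, Polynomial.eval_C] at h1
      linarith [hsplit, hξ0, h1]
    have hfact : (0:ℝ) < (ℓ₀.factorial : ℝ) := by exact_mod_cast ℓ₀.factorial_pos
    have hcbound : |c| ≤ S / 2 := by
      have h1 : |(ℓ₀.factorial : ℝ) * c| ≤ M ℓ₀ * S := by
        rw [← hfiter]; exact hder ℓ₀ ξ hξI
      rw [abs_mul, abs_of_pos hfact] at h1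
      have hM' : M ℓ₀ ≤ 1/2 * (ℓ₀.factorial : ℝ) := by
        rw [div_le_iff₀ hfact] at hℓ₀; linarith
      have h2 : M ℓ₀ * S ≤ 1/2 * (ℓ₀.factorial : ℝ) * S :=
        mul_le_mul_of_nonneg_right hM' hS0
      have h3 : (ℓ₀.factorial : ℝ) * |c| ≤ (ℓ₀.factorial : ℝ) * (S/2) := by linarith
      exact le_of_mul_le_mul_left h3 hfact
    -- evaluation bound for p at z
    have hbasis : ∀ i : Fin ℓ₀, |(Lagrange.basis Finset.univ x i).eval z| ≤ γ'⁻¹ := by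
      intro i
      have hbdef : Lagrange.basis Finset.univ x i
          = ∏ j ∈ Finset.univ.erase i, Lagrange.basisDivisor (x i) (x j) := rfl
      rw [hbdef, Polynomial.eval_prod, Finset.abs_prod]
      have hle : ∀ j ∈ Finset.univ.erase i,
          |Polynomial.eval z (Lagrange.basisDivisor (x i) (x j))| ≤ |x i - x j|⁻¹ := by
        intro j hj
        have hev : Polynomial.eval z (Lagrange.basisDivisor (x i) (x j))
            = (x i - x j)⁻¹ * (z - x j) := by
          simp [Lagrange.basisDivisor]
        rw [hev, abs_mul, abs_inv]
        have h1 : |z - x j| ≤ 1 := habs1 _ _ hzI (hxI j)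
        have h2 : (0:ℝ) ≤ |x i - x j|⁻¹ := inv_nonneg.2 (abs_nonneg _)
        nlinarith [abs_nonneg (z - x j)]
      calc ∏ j ∈ Finset.univ.erase i, |Polynomial.eval z (Lagrange.basisDivisor (x i) (x j))|
          ≤ ∏ j ∈ Finset.univ.erase i, |x i - x j|⁻¹ :=
            Finset.prod_le_prod (fun j _ => abs_nonneg _) hle
        _ = (∏ j ∈ Finset.univ.erase i, |x i - x j|)⁻¹ := Finset.prod_inv_distrib _
        _ ≤ γ'⁻¹ := inv_anti₀ hγ'pos (hγ'le i)
    have hpz : |p.eval z| ≤ ℓ₀ * (A * γ'⁻¹) := by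
      rw [hpdef, Lagrange.interpolate_apply, Polynomial.eval_finset_sum]
      refine le_trans (Finset.abs_sum_le_sum_abs _ _) ?_
      have hterm : ∀ i ∈ (Finset.univ : Finset (Fin ℓ₀)),
          |Polynomial.eval z (Polynomial.C (r i) * Lagrange.basis Finset.univ x i)| ≤ A * γ'⁻¹ := by
        intro i _
        rw [Polynomial.eval_mul, Polynomial.eval_C, abs_mul]
        refine mul_le_mul (hle_A _ (hxE i)) (hbasis i) (abs_nonneg _) hA0
      refine le_trans (Finset.sum_le_sum hterm) ?_
      rw [Finset.sum_const, Finset.card_univ, Fintype.card_fin, nsmul_eq_mul]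
    have hWz1 : |W.eval z| ≤ 1 := by
      rw [hWz, Finset.abs_prod]
      exact Finset.prod_le_one (fun i _ => abs_nonneg _) (fun i _ => habs1 _ _ hzI (hxI i))
    have hfzeq : f z = p.eval z + c * W.eval z := by
      rw [← hqz]
      simp [hqdef]
    have hfz : |f z| ≤ ℓ₀ * (A * γ'⁻¹) + S/2 := by
      rw [hfzeq]
      refine le_trans (abs_add_le _ _) (add_le_add hpz ?_)
      rw [abs_mul]
      calc |c| * |W.eval z| ≤ (S/2) * 1 :=
            mul_le_mul hcbound hWz1 (abs_nonneg _) (by linarith)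
        _ = S/2 := mul_one _
    -- conclude
    have hS2 : S / 2 ≤ ℓ₀ * (A * γ'⁻¹) := by
      have := le_trans hSz hfz
      linarith
    have hinvle : γ'⁻¹ ≤ (γ/2)⁻¹ := inv_anti₀ (by linarith) (le_of_lt hγ'gt)
    have hstep : ℓ₀ * (A * γ'⁻¹) ≤ ℓ₀ * (A * (γ/2)⁻¹) := by
      have h1 : A * γ'⁻¹ ≤ A * (γ/2)⁻¹ := mul_le_mul_of_nonneg_left hinvle hA0
      exact mul_le_mul_of_nonneg_left h1 (by positivity)
    have hfin : S ≤ 2 * (ℓ₀ * (A * (γ/2)⁻¹)) := by linarith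
    calc S ≤ 2 * (ℓ₀ * (A * (γ/2)⁻¹)) := hfin
      _ = (4 * ℓ₀ / γ) * A := by
          field_simp
          ring
end

section
/- For each α > 0, there exist constants c₁ > 0 and c₂ ∈ ℝ such that for all k ≥ 1, γ_k(ω_α) ≥ c₁ · exp(−c₂ · k · log k), where ω_α = { i^{−α} : i = 1, 2, … } ⊆ (0,1]. -/
open Set Finset

/-- The set `ω_α = { i^{-α} : i = 1, 2, … }`. -/
def omegaAlpha (α : ℝ) : Set ℝ := {x : ℝ | ∃ i : ℕ, 1 ≤ i ∧ x = (i : ℝ) ^ (-α)}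

/-! The points `1, 2^{-α}, …, k^{-α}` of `ω_α` are pairwise at distance at least `α k^{-(α+1)}`,
by the tangent-line inequality for the convex function `x ↦ x^{-α}`. Hence
`γ_k(ω_α) ≥ (α k^{-(α+1)})^{k-1}`, and `α ≥ k^{-c}` for a constant `c` and all `k ≥ 2`, so this is
at least `k^{-(α+1+c) k} = exp(-(α+1+c) k log k)`. -/

lemma mul_sub_mul_rpow_neg_le_rpow_neg_sub {α a b : ℝ} (hα : 0 ≤ α) (ha : 0 < a) (hab : a ≤ b) :
    α * (b - a) * b ^ (-(α + 1)) ≤ a ^ (-α) - b ^ (-α) := by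
  have hb : 0 < b := ha.trans_le hab
  have hba : 0 < b / a := div_pos hb ha
  have hlog : (b - a) / b ≤ Real.log (b / a) := by
    simpa [inv_div, sub_div, div_self hb.ne'] using Real.one_sub_inv_le_log_of_pos hba
  have hpow : 1 + α * ((b - a) / b) ≤ (b / a) ^ α := by
    rw [Real.rpow_def_of_pos hba]
    nlinarith [Real.add_one_le_exp (Real.log (b / a) * α)]
  have ha' : a ^ (-α) = b ^ (-α) * (b / a) ^ α := by
    rw [Real.div_rpow hb.le ha.le, Real.rpow_neg ha.le, Real.rpow_neg hb.le]
    field_simp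
  have hb' : b ^ (-(α + 1)) = b ^ (-α) / b := by
    rw [neg_add', Real.rpow_sub_one hb.ne']
  have hbα : 0 < b ^ (-α) := Real.rpow_pos_of_pos hb _
  rw [ha', hb']
  calc α * (b - a) * (b ^ (-α) / b) = b ^ (-α) * (α * ((b - a) / b)) := by ring
    _ ≤ b ^ (-α) * ((b / a) ^ α - 1) := by gcongr; linarith
    _ = _ := by ring

lemma le_abs_succ_rpow_neg_sub {α : ℝ} (hα : 0 ≤ α) {k : ℕ} {i j : Fin k} (hij : i ≠ j) :
    α * (k : ℝ) ^ (-(α + 1)) ≤ |((i : ℕ) + 1 : ℝ) ^ (-α) - ((j : ℕ) + 1 : ℝ) ^ (-α)| := by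
  wlog hlt : i < j generalizing i j
  · rw [abs_sub_comm]
    exact this hij.symm (lt_of_le_of_ne (not_lt.1 hlt) hij.symm)
  have hgap : ((i : ℕ) + 1 : ℝ) + 1 ≤ (j : ℕ) + 1 := by
    have : (i : ℕ) + 1 ≤ j := hlt
    exact_mod_cast Nat.succ_le_succ this
  have hjk : ((j : ℕ) + 1 : ℝ) ≤ k := by exact_mod_cast j.isLt
  calc α * (k : ℝ) ^ (-(α + 1)) ≤ α * 1 * ((j : ℕ) + 1 : ℝ) ^ (-(α + 1)) := by
        rw [mul_one]
        exact mul_le_mul_of_nonneg_left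
          (Real.rpow_le_rpow_of_nonpos (by positivity) hjk (by linarith)) hα
    _ ≤ α * (((j : ℕ) + 1 : ℝ) - ((i : ℕ) + 1)) * ((j : ℕ) + 1 : ℝ) ^ (-(α + 1)) := by
        refine mul_le_mul_of_nonneg_right (mul_le_mul_of_nonneg_left ?_ hα) (by positivity)
        linarith
    _ ≤ ((i : ℕ) + 1 : ℝ) ^ (-α) - ((j : ℕ) + 1 : ℝ) ^ (-α) :=
        mul_sub_mul_rpow_neg_le_rpow_neg_sub hα (by positivity) (by linarith)
    _ ≤ _ := le_abs_self _

lemma omegaAlpha_subset_Icc {α : ℝ} (hα : 0 ≤ α) : omegaAlpha α ⊆ Icc 0 1 := by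
  rintro _ ⟨n, hn, rfl⟩
  have hn' : (1 : ℝ) ≤ n := by exact_mod_cast hn
  exact ⟨by positivity, Real.rpow_le_one_of_one_le_of_nonpos hn' (neg_nonpos.2 hα)⟩

lemma bddAbove_range_iInf_prod_abs_sub {k : ℕ} {E : Set ℝ} (hE : E ⊆ Icc 0 1) :
    BddAbove (range fun x : { x : Fin k → ℝ // ∀ i, x i ∈ E } =>
      ⨅ i : Fin k, ∏ j ∈ univ.erase i, |x.1 i - x.1 j|) := by
  refine ⟨1, ?_⟩
  rintro _ ⟨x, rfl⟩
  cases isEmpty_or_nonempty (Fin k)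
  · simp [Real.iInf_of_isEmpty]
  have hprod : ∀ i, 0 ≤ ∏ j ∈ univ.erase i, |x.1 i - x.1 j| :=
    fun i => prod_nonneg fun _ _ => abs_nonneg _
  refine ciInf_le_of_le ⟨0, by rintro _ ⟨i, rfl⟩; exact hprod i⟩ (Classical.arbitrary _) ?_
  refine prod_le_one (fun _ _ => abs_nonneg _) fun j _ => ?_
  obtain ⟨hi0, hi1⟩ := hE (x.2 (Classical.arbitrary _))
  obtain ⟨hj0, hj1⟩ := hE (x.2 j)
  exact abs_sub_le_iff.2 ⟨by linarith, by linarith⟩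

lemma pow_le_gammaK_of_le_abs_sub {k : ℕ} (hk : 1 ≤ k) {E : Set ℝ} (hE : E ⊆ Icc 0 1)
    {x : Fin k → ℝ} (hxE : ∀ i, x i ∈ E) {δ : ℝ} (hδ : 0 ≤ δ)
    (hsep : ∀ i j, i ≠ j → δ ≤ |x i - x j|) : δ ^ (k - 1) ≤ gammaK k E := by
  have : Nonempty (Fin k) := ⟨⟨0, hk⟩⟩
  refine le_trans (le_ciInf fun i => ?_) (le_ciSup (bddAbove_range_iInf_prod_abs_sub hE) ⟨x, hxE⟩)
  calc δ ^ (k - 1) = ∏ _j ∈ univ.erase i, δ := by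
        rw [prod_const, card_erase_of_mem (mem_univ i), card_univ, Fintype.card_fin]
    _ ≤ _ := prod_le_prod (fun _ _ => hδ) fun j hj => hsep i j (ne_of_mem_erase hj).symm

lemma exists_rpow_neg_le {α : ℝ} (hα : 0 < α) : ∃ c ≥ (0 : ℝ), ∀ x : ℝ, 2 ≤ x → x ^ (-c) ≤ α := by
  refine ⟨max (0 : ℝ) (-Real.logb 2 α), le_max_left _ _, fun x hx => ?_⟩
  calc x ^ (-max (0 : ℝ) (-Real.logb 2 α)) ≤ 2 ^ (-max (0 : ℝ) (-Real.logb 2 α)) :=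
        Real.rpow_le_rpow_of_nonpos two_pos hx (neg_nonpos.2 (le_max_left _ _))
    _ ≤ 2 ^ Real.logb 2 α :=
        Real.rpow_le_rpow_of_exponent_le one_le_two (by linarith [le_max_right (0 : ℝ) (-Real.logb 2 α)])
    _ = α := Real.rpow_logb two_pos (by norm_num) hα

/-- For each `α > 0` there are `c₁ > 0` and `c₂ ∈ ℝ` with
`γ_k(ω_α) ≥ c₁ exp(-c₂ k log k)` for all `k ≥ 1`. -/
theorem gammaK_omegaAlpha_lower_bound (α : ℝ) (hα : 0 < α) :
    ∃ c₁ > (0:ℝ), ∃ c₂ : ℝ, ∀ k : ℕ, 1 ≤ k →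
      c₁ * Real.exp (-(c₂ * k * Real.log k)) ≤ gammaK k (omegaAlpha α) := by
  obtain ⟨c, hc, hcα⟩ := exists_rpow_neg_le hα
  refine ⟨1, one_pos, α + 1 + c, fun k hk => ?_⟩
  have hk1 : (1 : ℝ) ≤ k := by exact_mod_cast hk
  have hk0 : (0 : ℝ) < k := one_pos.trans_le hk1
  have hpow : ((k : ℝ) ^ (-(α + 1 + c))) ^ (k - 1) ≤ (α * (k : ℝ) ^ (-(α + 1))) ^ (k - 1) := by
    rcases hk.eq_or_lt with rfl | hk2
    · simp
    rw [show -(α + 1 + c) = -c + -(α + 1) by ring, Real.rpow_add hk0]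
    gcongr
    exact hcα k (by exact_mod_cast hk2)
  calc 1 * Real.exp (-((α + 1 + c) * k * Real.log k)) = ((k : ℝ) ^ (-(α + 1 + c))) ^ k := by
        rw [one_mul, ← Real.rpow_mul_natCast hk0.le, Real.rpow_def_of_pos hk0]
        ring_nf
    _ ≤ ((k : ℝ) ^ (-(α + 1 + c))) ^ (k - 1) :=
        pow_le_pow_of_le_one (by positivity)
          (Real.rpow_le_one_of_one_le_of_nonpos hk1 (by linarith)) (Nat.sub_le k 1)
    _ ≤ (α * (k : ℝ) ^ (-(α + 1))) ^ (k - 1) := hpow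
    _ ≤ gammaK k (omegaAlpha α) :=
        pow_le_gammaK_of_le_abs_sub hk (omegaAlpha_subset_Icc hα.le)
          (fun i => ⟨i + 1, by omega, by push_cast; rfl⟩) (by positivity)
          fun _ _ hij => le_abs_succ_rpow_neg_sub hα.le hij
end

section
/- Let N ≥ 1 and let x₁, …, x_N be points in (0,1)ⁿ with n ≥ 2. Then there exists a nonzero function ψ on (0,1)ⁿ, which is a finite linear combination of products sin(π r₁ x⁽¹⁾)⋯sin(π r_n x⁽ⁿ⁾) with r₁² + ⋯ + r_n² equal to a fixed value r, such that ψ(x₁) = ⋯ = ψ(x_N) = 0. -/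
open Set Finset Real

/-!
If `r` is a sum of `n` positive squares in `N + 1` ways `r = v₁² + ⋯ + vₙ²`, the values at the `N`
points of the `N + 1` eigenfunctions `∏ᵢ sin (π vᵢ xᵢ)` are linearly dependent in `ℝᴺ`, which gives
a nontrivial combination vanishing at the points. Such `r` exist: the Gaussian integers
`5ʲ (3 + 4i) ^ (K - j)`, `j < K`, all have norm `25 ^ K`, and their real parts have pairwise
distinct `5`-adic valuations because `(3 + 4i) ^ m ≡ 3 + 4i mod 5`. The combination is not zero on
the cube: when the first coordinates of the vectors are distinct, freezing the other coordinates
reduces this to the orthogonality of the functions `sin (π a t)` on `(0, 1)`.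
-/

lemma integral_cos_int_mul_pi_mul {k : ℤ} (hk : k ≠ 0) :
    ∫ t in (0:ℝ)..1, cos (k * π * t) = 0 := by
  have hkπ : (k : ℝ) * π ≠ 0 := mul_ne_zero (by exact_mod_cast hk) pi_ne_zero
  simp [intervalIntegral.integral_comp_mul_left cos hkπ, integral_cos, sin_int_mul_pi]

lemma integral_sin_mul_sin {a b : ℕ} (ha : 0 < a) (hb : 0 < b) :
    ∫ t in (0:ℝ)..1, sin (π * a * t) * sin (π * b * t) = if a = b then 1 / 2 else 0 := by
  have product_to_sum (t : ℝ) : sin (π * a * t) * sin (π * b * t) =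
      (cos (((a - b : ℤ) : ℝ) * π * t) - cos (((a + b : ℤ) : ℝ) * π * t)) / 2 := by
    push_cast
    rw [show ((a:ℝ) - b) * π * t = π * a * t - π * b * t by ring,
      show ((a:ℝ) + b) * π * t = π * a * t + π * b * t by ring, cos_sub, cos_add]
    ring
  simp_rw [product_to_sum]
  rw [intervalIntegral.integral_div, intervalIntegral.integral_sub
    ((by fun_prop : Continuous _).intervalIntegrable _ _)
    ((by fun_prop : Continuous _).intervalIntegrable _ _),
    integral_cos_int_mul_pi_mul (k := a + b) (by omega)]
  split_ifs with hab
  · simp [hab]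
  · rw [integral_cos_int_mul_pi_mul (by omega)]
    simp

lemma eq_zero_of_sum_sin_eq_zero {ι : Type*} {s : Finset ι} {a : ι → ℕ}
    (ha : ∀ j ∈ s, 0 < a j) (ha_inj : Set.InjOn a s) {d : ι → ℝ}
    (h : ∀ t ∈ Ioo (0:ℝ) 1, ∑ j ∈ s, d j * sin (π * a j * t) = 0) :
    ∀ j ∈ s, d j = 0 := by
  intro k hk
  set F : ℝ → ℝ := fun t => ∑ j ∈ s, d j * sin (π * a j * t)
  have hF_Icc : EqOn F 0 (Icc 0 1) := by
    have := (show EqOn F 0 (Ioo 0 1) from h).closure (by fun_prop) continuous_const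
    rwa [closure_Ioo zero_ne_one] at this
  have hF_mul (t : ℝ) : 2 * (F t * sin (π * a k * t)) =
      ∑ j ∈ s, 2 * d j * (sin (π * a j * t) * sin (π * a k * t)) := by
    simp only [F, Finset.sum_mul, Finset.mul_sum]
    exact Finset.sum_congr rfl fun j _ => by ring
  calc d k = ∫ t in (0:ℝ)..1, 2 * (F t * sin (π * a k * t)) := by
        simp_rw [hF_mul]
        rw [intervalIntegral.integral_finsetSum
            fun j _ => ((by fun_prop : Continuous _).intervalIntegrable _ _),
          Finset.sum_eq_single_of_mem k hk]
        · rw [intervalIntegral.integral_const_mul, integral_sin_mul_sin (ha k hk) (ha k hk),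
            if_pos rfl]
          ring
        · intro j hj hjk
          rw [intervalIntegral.integral_const_mul, integral_sin_mul_sin (ha j hj) (ha k hk),
            if_neg (fun e => hjk (ha_inj hj hk e)), mul_zero]
    _ = 0 := by
        rw [intervalIntegral.integral_congr (g := 0)]
        · simp
        · intro t ht
          rw [Set.uIcc_of_le zero_le_one] at ht
          simp [hF_Icc ht]

lemma eq_zero_of_sum_prod_sin_eq_zero {n : ℕ} {S : Finset (Fin (n + 1) → ℕ)}
    (hS_pos : ∀ v ∈ S, ∀ i, 0 < v i) (hS_inj : Set.InjOn (fun v : Fin (n + 1) → ℕ => v 0) S)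
    {c : (Fin (n + 1) → ℕ) → ℝ}
    (h : ∀ y : Fin (n + 1) → ℝ, (∀ i, y i ∈ Ioo (0:ℝ) 1) →
      ∑ v ∈ S, c v * ∏ i, sin (π * v i * y i) = 0) :
    ∀ v ∈ S, c v = 0 := by
  intro w hw
  -- Freeze the last `n` coordinates where the factors of `w` equal `sin (π / 2) = 1`.
  set y : Fin n → ℝ := fun i => 1 / (2 * w i.succ)
  have hy (i : Fin n) : y i ∈ Ioo (0:ℝ) 1 := by
    have : (1:ℝ) ≤ w i.succ := by exact_mod_cast hS_pos w hw i.succ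
    constructor
    · positivity
    · rw [div_lt_one (by positivity)]
      linarith
  have hwy : ∏ i, sin (π * w i.succ * y i) = 1 := by
    refine Finset.prod_eq_one fun i _ => ?_
    have : (w i.succ : ℝ) ≠ 0 := by exact_mod_cast (hS_pos w hw i.succ).ne'
    rw [show π * w i.succ * y i = π / 2 by simp only [y]; field_simp, sin_pi_div_two]
  have := eq_zero_of_sum_sin_eq_zero (fun v hv => hS_pos v hv 0) hS_inj
    (d := fun v => c v * ∏ i, sin (π * v i.succ * y i)) (fun t ht => ?_) w hw
  · simpa [hwy] using this
  · simpa [Fin.prod_univ_succ, mul_assoc, mul_comm, mul_left_comm] using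
      h (Fin.cons t y) (Fin.cases ht hy)

lemma exists_ne_zero_sum_mul_apply_eq_zero {ι X : Type*} {N : ℕ} {S : Finset ι} (hS : N < #S)
    (f : ι → X → ℝ) (x : Fin N → X) :
    ∃ c : ι → ℝ, (∃ i ∈ S, c i ≠ 0) ∧ ∀ m, ∑ i ∈ S, c i * f i (x m) = 0 := by
  have hdep : ¬ LinearIndependent ℝ (fun (i : S) (m : Fin N) => f i (x m)) := fun hli => by
    have := hli.fintype_card_le_finrank
    simp only [Fintype.card_coe, Module.finrank_fin_fun] at this
    omega
  obtain ⟨g, hg, i, hi⟩ := Fintype.not_linearIndependent_iff.mp hdep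
  refine ⟨Subtype.val.extend g 0, ⟨i, i.2, by rwa [Subtype.val_injective.extend_apply]⟩,
    fun m => ?_⟩
  rw [← Finset.sum_coe_sort S]
  simpa [Subtype.val_injective.extend_apply] using congrFun hg m

lemma re_sq_add_im_sq_pow (z : GaussianInt) (m : ℕ) :
    (z ^ m).re ^ 2 + (z ^ m).im ^ 2 = (z.re ^ 2 + z.im ^ 2) ^ m := by
  have h : (z ^ m).norm = z.norm ^ m := map_pow Zsqrtd.normMonoidHom z m
  rw [Zsqrtd.norm_def, Zsqrtd.norm_def] at h
  linear_combination h

lemma three_add_four_i_pow_emod_five {m : ℕ} (hm : m ≠ 0) :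
    ((⟨3, 4⟩ : GaussianInt) ^ m).re % 5 = 3 ∧ ((⟨3, 4⟩ : GaussianInt) ^ m).im % 5 = 4 := by
  induction m, Nat.one_le_iff_ne_zero.mpr hm using Nat.le_induction with
  | base => simp
  | succ m _ ih =>
    simp only [pow_succ, Zsqrtd.re_mul, Zsqrtd.im_mul]
    omega

lemma exists_sq_add_sq_eq_25_pow {m : ℕ} (hm : m ≠ 0) :
    ∃ p q : ℕ, p ^ 2 + q ^ 2 = 25 ^ m ∧ ¬ 5 ∣ p ∧ ¬ 5 ∣ q := by
  obtain ⟨hre, him⟩ := three_add_four_i_pow_emod_five hm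
  refine ⟨((⟨3, 4⟩ : GaussianInt) ^ m).re.natAbs, ((⟨3, 4⟩ : GaussianInt) ^ m).im.natAbs,
    ?_, ?_, ?_⟩
  · have h := re_sq_add_im_sq_pow ⟨3, 4⟩ m
    zify
    simpa using h
  · rw [← Int.natCast_dvd, Int.dvd_iff_emod_eq_zero]
    omega
  · rw [← Int.natCast_dvd, Int.dvd_iff_emod_eq_zero]
    omega

lemma exists_injective_sq_add_sq_eq (K : ℕ) : ∃ (r : ℕ) (a b : Fin K → ℕ),
    Function.Injective a ∧ (∀ j, 0 < a j ∧ 0 < b j) ∧ ∀ j, a j ^ 2 + b j ^ 2 = r := by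
  have : Fact (Nat.Prime 5) := ⟨by norm_num⟩
  choose p q hpq hp hq using
    fun j : Fin K => exists_sq_add_sq_eq_25_pow (m := K - j) (by omega)
  have hp0 (j : Fin K) : p j ≠ 0 := fun h => hp j (by rw [h]; exact dvd_zero 5)
  have hq0 (j : Fin K) : q j ≠ 0 := fun h => hq j (by rw [h]; exact dvd_zero 5)
  have hval (j : Fin K) : padicValNat 5 (5 ^ (j : ℕ) * p j) = j := by
    rw [padicValNat.mul (by positivity) (hp0 j),
      padicValNat.prime_pow, padicValNat.eq_zero_of_not_dvd (hp j), add_zero]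
  refine ⟨25 ^ K, fun j => 5 ^ (j : ℕ) * p j, fun j => 5 ^ (j : ℕ) * q j,
    fun j k hjk => Fin.ext (by rw [← hval j, ← hval k]; exact congrArg _ hjk),
    fun j => ⟨Nat.pos_of_ne_zero (mul_ne_zero (by positivity) (hp0 j)),
      Nat.pos_of_ne_zero (mul_ne_zero (by positivity) (hq0 j))⟩, fun j => ?_⟩
  calc (5 ^ (j : ℕ) * p j) ^ 2 + (5 ^ (j : ℕ) * q j) ^ 2
      = 25 ^ (j : ℕ) * (p j ^ 2 + q j ^ 2) := by
        rw [show (25 : ℕ) = 5 ^ 2 from rfl, ← pow_mul]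
        ring
    _ = 25 ^ K := by rw [hpq, ← pow_add]; congr 1; omega

lemma exists_finset_sum_sq_eq (m K : ℕ) : ∃ (r : ℕ) (S : Finset (Fin (m + 2) → ℕ)),
    K ≤ #S ∧ (∀ v ∈ S, ∀ i, 0 < v i) ∧ (∀ v ∈ S, ∑ i, v i ^ 2 = r) ∧
      Set.InjOn (fun v : Fin (m + 2) → ℕ => v 0) S := by
  obtain ⟨r, a, b, ha_inj, hab_pos, hab_sq⟩ := exists_injective_sq_add_sq_eq K
  set v : Fin K → Fin (m + 2) → ℕ := fun j => Fin.cons (a j) (Fin.cons (b j) 1)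
  have hv_inj : Function.Injective v := fun j k hjk => ha_inj (congrFun hjk 0)
  refine ⟨r + m, univ.image v, by
    rw [Finset.card_image_of_injective _ hv_inj, Finset.card_univ, Fintype.card_fin], ?_, ?_, ?_⟩
  · rintro _ hv i
    obtain ⟨j, -, rfl⟩ := Finset.mem_image.mp hv
    refine Fin.cases (hab_pos j).1 (Fin.cases (hab_pos j).2 fun _ => ?_) i
    simp [v]
  · rintro _ hv
    obtain ⟨j, -, rfl⟩ := Finset.mem_image.mp hv
    simp [v, Fin.sum_univ_succ, ← hab_sq j, add_assoc]
  · rintro _ hv _ hw hvw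
    obtain ⟨j, -, rfl⟩ := Finset.mem_image.mp hv
    obtain ⟨k, -, rfl⟩ := Finset.mem_image.mp hw
    exact congrArg v (ha_inj hvw)

theorem eigenfunction_vanishing_at_finitely_many_points_general
    (n N : ℕ) (hn : 2 ≤ n)
    (x : Fin N → (Fin n → ℝ)) :
    ∃ (r : ℕ) (S : Finset (Fin n → ℕ)) (c : (Fin n → ℕ) → ℝ),
      (∀ v ∈ S, (∀ i, 0 < v i) ∧ ∑ i, (v i) ^ 2 = r) ∧
      (∃ y : Fin n → ℝ, (∀ i, y i ∈ Ioo (0:ℝ) 1) ∧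
        ∑ v ∈ S, c v * ∏ i, Real.sin (π * v i * y i) ≠ 0) ∧
      (∀ m, ∑ v ∈ S, c v * ∏ i, Real.sin (π * v i * x m i) = 0) := by
  obtain ⟨m, rfl⟩ : ∃ m, n = m + 2 := ⟨n - 2, by omega⟩
  obtain ⟨r, S, hS_card, hS_pos, hS_sq, hS_inj⟩ := exists_finset_sum_sq_eq m (N + 1)
  obtain ⟨c, ⟨w, hw, hcw⟩, hc⟩ := exists_ne_zero_sum_mul_apply_eq_zero (by omega : N < #S)
    (fun v y => ∏ i, sin (π * v i * y i)) x
  refine ⟨r, S, c, fun v hv => ⟨hS_pos v hv, hS_sq v hv⟩, ?_, hc⟩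
  by_contra! h
  exact hcw (eq_zero_of_sum_prod_sin_eq_zero hS_pos hS_inj h w hw)

/-- Given `N ≥ 1` points in the open cube `(0,1)ⁿ`, `n ≥ 2`, there is a nonzero linear
combination `ψ` of eigenfunctions `x ↦ ∏ᵢ sin(π rᵢ x⁽ⁱ⁾)` with `r₁² + ⋯ + r_n²` equal to a
fixed value `r`, vanishing at all `N` points. -/
theorem eigenfunction_vanishing_at_finitely_many_points
    (n N : ℕ) (hn : 2 ≤ n) (hN : 1 ≤ N)
    (x : Fin N → (Fin n → ℝ)) (hx : ∀ m i, x m i ∈ Ioo (0:ℝ) 1) :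
    ∃ (r : ℕ) (S : Finset (Fin n → ℕ)) (c : (Fin n → ℕ) → ℝ),
      (∀ v ∈ S, (∀ i, 0 < v i) ∧ ∑ i, (v i) ^ 2 = r) ∧
      (∃ y : Fin n → ℝ, (∀ i, y i ∈ Ioo (0:ℝ) 1) ∧
        ∑ v ∈ S, c v * ∏ i, Real.sin (π * v i * y i) ≠ 0) ∧
      (∀ m, ∑ v ∈ S, c v * ∏ i, Real.sin (π * v i * x m i) = 0) :=
  eigenfunction_vanishing_at_finitely_many_points_general n N hn x
end

section
/- Let n ≥ 2, T > 0, and let ω ⊂ (0,1)ⁿ be a finite set. Then the heat equation on (0,1)ⁿ with Dirichlet boundary conditions is not observable from ω at time T: there is no constant C > 0 such that ‖u(T,·)‖_{L^∞} ≤ C ∫₀^T sup_{x∈ω} |u(t,x)| dt holds for every solution u with initial data in L². -/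
open Set Real MeasureTheory

open Zsqrtd GaussianInt

namespace HeatAux

noncomputable def gp : GaussianInt := ⟨2, 1⟩
noncomputable def gq : GaussianInt := ⟨2, -1⟩

lemma gp_norm : (gp).norm = 5 := by simp [Zsqrtd.norm_def, gp]
lemma gq_norm : (gq).norm = 5 := by simp [Zsqrtd.norm_def, gq]

lemma gp_ne_zero : gp ≠ 0 := by
  intro h; have := congrArg Zsqrtd.re h; simp [gp] at this
lemma gq_ne_zero : gq ≠ 0 := by
  intro h; have := congrArg Zsqrtd.re h; simp [gq] at this

lemma not_unit_of_norm_five {z : GaussianInt} (h : z.norm = 5) : ¬ IsUnit z := by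
  intro hu
  rw [← Zsqrtd.norm_eq_one_iff] at hu
  rw [h] at hu; norm_num at hu

lemma irreducible_of_norm_five {z : GaussianInt} (h : z.norm = 5) : Irreducible z := by
  constructor
  · exact not_unit_of_norm_five h
  · intro a b hab
    have hnorm : a.norm * b.norm = 5 := by rw [← Zsqrtd.norm_mul, ← hab, h]
    have ha : 0 ≤ a.norm := GaussianInt.norm_nonneg a
    have hb : 0 ≤ b.norm := GaussianInt.norm_nonneg b
    have h5 : a.norm.natAbs * b.norm.natAbs = 5 := by
      have := congrArg Int.natAbs hnorm
      rwa [Int.natAbs_mul] at this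
    have hd : a.norm.natAbs ∣ 5 := ⟨b.norm.natAbs, h5.symm⟩
    rcases (Nat.Prime.eq_one_or_self_of_dvd (by norm_num) _ hd) with h1 | h1
    · left; exact Zsqrtd.norm_eq_one_iff.mp h1
    · right
      have : b.norm.natAbs = 1 := by rw [h1] at h5; omega
      exact Zsqrtd.norm_eq_one_iff.mp this

set_option synthInstance.maxHeartbeats 1000000 in
lemma gp_prime : Prime gp := (irreducible_iff_prime).mp (irreducible_of_norm_five gp_norm)

lemma gp_not_dvd_gq : ¬ gp ∣ gq := by
  rintro ⟨c, hc⟩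
  have hre := congrArg Zsqrtd.re hc
  have him := congrArg Zsqrtd.im hc
  simp [gp, gq, Zsqrtd.re_mul, Zsqrtd.im_mul] at hre him
  omega

end HeatAux

namespace HeatAux

lemma gpq_pow_ne_zero (a b : ℕ) : gp ^ a * gq ^ b ≠ 0 :=
  mul_ne_zero (pow_ne_zero _ gp_ne_zero) (pow_ne_zero _ gq_ne_zero)

lemma key_contra (α β γ δ : ℕ) (u : GaussianInt) (hu : IsUnit u) (hsum : α + β = γ + δ)
    (hlt : γ < α) (heq : gp ^ α * gq ^ β = u * (gp ^ γ * gq ^ δ)) : False := by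
  obtain ⟨s, hs⟩ : ∃ s, α = γ + s + 1 := ⟨α - γ - 1, by omega⟩
  obtain ⟨e, he⟩ : ∃ e, δ = β + e := ⟨δ - β, by omega⟩
  have hse : e = s + 1 := by omega
  subst hs he hse
  have hcan : gp ^ (s + 1) = u * gq ^ (s + 1) := by
    have h0 : gp ^ γ * gq ^ β ≠ 0 := gpq_pow_ne_zero _ _
    apply mul_left_cancel₀ h0
    calc gp ^ γ * gq ^ β * gp ^ (s+1) = gp ^ (γ + (s+1)) * gq ^ β := by ring
    _ = u * (gp ^ γ * gq ^ (β + (s+1))) := heq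
    _ = gp ^ γ * gq ^ β * (u * gq ^ (s+1)) := by ring
  have hdvd : gp ∣ gq ^ (s + 1) := by
    obtain ⟨w, rfl⟩ := hu
    have : gq ^ (s+1) = gp ^ (s+1) * ↑w⁻¹ := by
      rw [hcan]; rw [mul_comm (w : GaussianInt)]; rw [mul_assoc]
      simp
    exact dvd_trans (dvd_pow_self gp (Nat.succ_ne_zero s)) ⟨↑w⁻¹, this⟩
  exact gp_not_dvd_gq (gp_prime.dvd_of_dvd_pow hdvd)

lemma key (α β γ δ : ℕ) (u : GaussianInt) (hu : IsUnit u) (hsum : α + β = γ + δ)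
    (heq : gp ^ α * gq ^ β = u * (gp ^ γ * gq ^ δ)) : α = γ := by
  rcases lt_trichotomy α γ with h | h | h
  · obtain ⟨w, rfl⟩ := hu
    have heq' : gp ^ γ * gq ^ δ = ↑w⁻¹ * (gp ^ α * gq ^ β) := by
      rw [heq]; rw [← mul_assoc]; simp
    exact absurd (key_contra γ δ α β _ (Units.isUnit _) hsum.symm h heq') (fun h => h)
  · exact h
  · exact absurd (key_contra α β γ δ u hu hsum h heq) (fun h => h)

noncomputable def gz (M j : ℕ) : GaussianInt := gp ^ j * gq ^ (M - j)

lemma star_gp : star gp = gq := by ext <;> simp [gp, gq]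
lemma star_gq : star gq = gp := by ext <;> simp [gp, gq]

lemma star_gz (M j : ℕ) : star (gz M j) = gp ^ (M - j) * gq ^ j := by
  rw [gz, star_mul', star_pow, star_pow, star_gp, star_gq, mul_comm]

lemma norm_pow' (x : GaussianInt) (k : ℕ) : (x ^ k).norm = x.norm ^ k := by
  induction k with
  | zero => simp [Zsqrtd.norm_def]
  | succ k ih => rw [pow_succ, pow_succ, Zsqrtd.norm_mul, ih]

lemma gz_norm (M j : ℕ) (hj : j ≤ M) : (gz M j).norm = 5 ^ M := by
  rw [gz, Zsqrtd.norm_mul, norm_pow', norm_pow', gp_norm, gq_norm,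
    ← pow_add, Nat.add_sub_cancel' hj]

lemma gz_im_ne (m j : ℕ) (hj : j ≤ m) : (gz (2*m+1) j).im ≠ 0 := by
  intro h0
  have hstar : star (gz (2*m+1) j) = gz (2*m+1) j := by
    ext
    · simp
    · simp [h0]
  rw [star_gz] at hstar
  have := key (2*m+1-j) j j (2*m+1-j) 1 isUnit_one (by omega) (by rw [one_mul]; exact hstar)
  omega

lemma gz_re_ne (m j : ℕ) (hj : j ≤ m) : (gz (2*m+1) j).re ≠ 0 := by
  intro h0
  have hstar : star (gz (2*m+1) j) = -gz (2*m+1) j := by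
    ext
    · simp [h0]
    · simp
  rw [star_gz] at hstar
  have heq : gz (2*m+1) j = (-1) * (gp ^ (2*m+1-j) * gq ^ j) := by
    rw [hstar]; ring
  have := key j (2*m+1-j) (2*m+1-j) j (-1) (IsUnit.neg isUnit_one) (by omega) (by rw [← gz]; exact heq)
  omega

lemma gz_inj (m j k : ℕ) (hj : j ≤ m) (hk : k ≤ m)
    (h : (gz (2*m+1) j).re.natAbs = (gz (2*m+1) k).re.natAbs) : j = k := by
  set M := 2*m+1 with hM
  have hnj : (gz M j).norm = 5 ^ M := gz_norm M j (by omega)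
  have hnk : (gz M k).norm = 5 ^ M := gz_norm M k (by omega)
  have hsq : (gz M j).re ^ 2 + (gz M j).im ^ 2 = (gz M k).re ^ 2 + (gz M k).im ^ 2 := by
    have e1 : (gz M j).norm = (gz M j).re ^ 2 + (gz M j).im ^ 2 := by
      rw [Zsqrtd.norm_def]; ring
    have e2 : (gz M k).norm = (gz M k).re ^ 2 + (gz M k).im ^ 2 := by
      rw [Zsqrtd.norm_def]; ring
    rw [← e1, ← e2, hnj, hnk]
  have hre2 : (gz M j).re ^ 2 = (gz M k).re ^ 2 := by
    rw [← Int.natAbs_sq (gz M j).re, ← Int.natAbs_sq (gz M k).re, h]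
  have him2 : (gz M j).im ^ 2 = (gz M k).im ^ 2 := by linarith
  have hre : (gz M j).re = (gz M k).re ∨ (gz M j).re = -(gz M k).re :=
    Int.natAbs_eq_natAbs_iff.mp h
  have him : (gz M j).im = (gz M k).im ∨ (gz M j).im = -(gz M k).im := by
    apply mul_self_eq_mul_self_iff.mp
    rw [← pow_two, ← pow_two]; exact him2
  have hMj : j ≤ M := by omega
  have hMk : k ≤ M := by omega
  rcases hre with h1 | h1 <;> rcases him with h2 | h2
  · -- gz M j = gz M k
    have hzz : gz M j = 1 * (gp ^ k * gq ^ (M - k)) := by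
      rw [one_mul, ← gz]; exact Zsqrtd.ext h1 h2
    exact key j (M-j) k (M-k) 1 isUnit_one (by omega) hzz
  · -- gz M j = star (gz M k)
    have hzz : gz M j = 1 * (gp ^ (M - k) * gq ^ k) := by
      rw [one_mul, ← star_gz]
      apply Zsqrtd.ext <;> simp [h1, h2]
    have := key j (M-j) (M-k) k 1 isUnit_one (by omega) hzz
    omega
  · -- gz M j = - star (gz M k)
    have hzz : gz M j = (-1) * (gp ^ (M - k) * gq ^ k) := by
      have : gz M j = - star (gz M k) := by
        apply Zsqrtd.ext <;> simp [h1, h2]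
      rw [this, star_gz]; ring
    have := key j (M-j) (M-k) k (-1) (IsUnit.neg isUnit_one) (by omega) hzz
    omega
  · -- gz M j = - gz M k
    have hzz : gz M j = (-1) * (gp ^ k * gq ^ (M - k)) := by
      have : gz M j = - gz M k := by
        apply Zsqrtd.ext <;> simp [h1, h2]
      rw [this, gz]; ring
    exact key j (M-j) k (M-k) (-1) (IsUnit.neg isUnit_one) (by omega) hzz

end HeatAux


open Real MeasureTheory intervalIntegral

namespace HeatAux

/-- `∫ x in 0..1, cos (k π x) = 0` for a nonzero integer `k`. -/
lemma integral_cos_int (k : ℤ) (hk : k ≠ 0) :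
    ∫ x in (0:ℝ)..1, Real.cos (k * π * x) = 0 := by
  have hc : (k : ℝ) * π ≠ 0 :=
    mul_ne_zero (Int.cast_ne_zero.mpr hk) Real.pi_ne_zero
  have h1 : (fun x : ℝ => Real.cos (k * π * x)) = fun x => Real.cos ((k * π) * x) := by
    funext x; ring_nf
  rw [h1, intervalIntegral.integral_comp_mul_left (fun x => Real.cos x) hc]
  simp [integral_cos, Real.sin_int_mul_pi]

lemma integral_sin_sin (a b : ℕ) (ha : 1 ≤ a) (hb : 1 ≤ b) :
    ∫ x in (0:ℝ)..1, Real.sin (a * π * x) * Real.sin (b * π * x)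
      = if a = b then 1/2 else 0 := by
  have hpt : ∀ x : ℝ, Real.sin (a * π * x) * Real.sin (b * π * x)
      = (Real.cos ((((a:ℤ) - b : ℤ) : ℝ) * π * x) - Real.cos ((((a:ℤ) + b : ℤ) : ℝ) * π * x)) / 2 := by
    intro x
    have h1 : (((a:ℤ) - b : ℤ) : ℝ) * π * x = a * π * x - b * π * x := by push_cast; ring
    have h2 : (((a:ℤ) + b : ℤ) : ℝ) * π * x = a * π * x + b * π * x := by push_cast; ring
    rw [h1, h2, Real.cos_sub, Real.cos_add]
    ring
  simp only [hpt]
  have hint : ∀ k : ℤ, IntervalIntegrable (fun x : ℝ => Real.cos ((k:ℝ) * π * x)) volume 0 1 :=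
    fun k => (Real.continuous_cos.comp (by continuity)).intervalIntegrable 0 1
  rw [intervalIntegral.integral_div, intervalIntegral.integral_sub (hint _) (hint _)]
  by_cases hab : a = b
  · subst hab
    have h0 : ((a:ℤ) - a : ℤ) = 0 := by ring
    rw [h0]
    have : (fun x : ℝ => Real.cos (((0:ℤ):ℝ) * π * x)) = fun _ => (1:ℝ) := by
      funext x; norm_num
    rw [integral_cos_int ((a:ℤ)+a) (by omega)]
    simp only [this]
    simp
  · rw [integral_cos_int ((a:ℤ)-b) (by omega), integral_cos_int ((a:ℤ)+b) (by omega)]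
    simp [hab]

/-- Second derivative of a finite sum of scaled sines. -/
lemma deriv2_sum_sin {J : Type*} [Fintype J] (D ν : J → ℝ) (y : ℝ) :
    deriv (deriv (fun z : ℝ => ∑ j, D j * Real.sin (ν j * z))) y
      = ∑ j, D j * (-(ν j ^ 2) * Real.sin (ν j * y)) := by
  have h1 : ∀ w : ℝ, HasDerivAt (fun z : ℝ => ∑ j, D j * Real.sin (ν j * z))
      (∑ j, D j * (ν j * Real.cos (ν j * w))) w := by
    intro w
    apply HasDerivAt.fun_sum
    intro j _
    have := (((hasDerivAt_id w).const_mul (ν j)).sin).const_mul (D j)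
    simpa [mul_comm, mul_assoc, mul_left_comm] using this
  have hd1 : deriv (fun z : ℝ => ∑ j, D j * Real.sin (ν j * z))
      = fun w => ∑ j, D j * (ν j * Real.cos (ν j * w)) :=
    funext fun w => (h1 w).deriv
  rw [hd1]
  have h2 : HasDerivAt (fun w : ℝ => ∑ j, D j * (ν j * Real.cos (ν j * w)))
      (∑ j, D j * (ν j * (-Real.sin (ν j * y) * ν j))) y := by
    apply HasDerivAt.fun_sum
    intro j _
    have := (((hasDerivAt_id y).const_mul (ν j)).cos).const_mul (D j * ν j)
    simpa [mul_comm, mul_assoc, mul_left_comm] using this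
  rw [h2.deriv]
  apply Finset.sum_congr rfl
  intro j _
  ring

end HeatAux


open Real MeasureTheory

namespace HeatAux

noncomputable def phi (n : ℕ) (F : Fin n → ℕ) (x : Fin n → ℝ) : ℝ :=
  ∏ i, Real.sin ((F i : ℝ) * π * x i)

noncomputable def sol (n m : ℕ) (Λ : ℝ) (c : Fin (m+1) → ℝ) (F : Fin (m+1) → Fin n → ℕ)
    (t : ℝ) (x : Fin n → ℝ) : ℝ :=
  Real.exp (-Λ * t) * ∑ j, c j * phi n (F j) x

lemma abs_phi_le_one (n : ℕ) (F : Fin n → ℕ) (x : Fin n → ℝ) : |phi n F x| ≤ 1 := by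
  rw [phi, Finset.abs_prod]
  apply Finset.prod_le_one
  · intro i _; exact abs_nonneg _
  · intro i _; exact abs_le.mpr ⟨Real.neg_one_le_sin _, Real.sin_le_one _⟩

lemma sol_smooth (n m : ℕ) (Λ : ℝ) (c : Fin (m+1) → ℝ) (F : Fin (m+1) → Fin n → ℕ) :
    ContDiff ℝ (⊤ : ℕ∞) (fun p : ℝ × (Fin n → ℝ) => sol n m Λ c F p.1 p.2) := by
  apply ContDiff.mul
  · exact Real.contDiff_exp.comp (contDiff_const.mul contDiff_fst)
  · apply ContDiff.sum
    intro j _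
    apply ContDiff.mul contDiff_const
    simp only [phi]
    apply contDiff_prod
    intro i _
    exact Real.contDiff_sin.comp
      (contDiff_const.mul ((contDiff_apply (𝕜 := ℝ) (E := ℝ) i).comp contDiff_snd))

lemma sol_bc (n m : ℕ) (Λ : ℝ) (c : Fin (m+1) → ℝ) (F : Fin (m+1) → Fin n → ℕ)
    (t : ℝ) (x : Fin n → ℝ) (i : Fin n) (hx : x i = 0 ∨ x i = 1) :
    sol n m Λ c F t x = 0 := by
  have hzero : ∀ j, phi n (F j) x = 0 := by
    intro j
    apply Finset.prod_eq_zero (Finset.mem_univ i)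
    rcases hx with h | h
    · rw [h]; simp
    · rw [h]; rw [mul_one]
      exact Real.sin_nat_mul_pi (F j i)
  simp [sol, hzero]

lemma sol_heat (n m : ℕ) (Λ : ℝ) (c : Fin (m+1) → ℝ) (F : Fin (m+1) → Fin n → ℕ)
    (hF : ∀ j, (∑ i, ((F j i : ℝ))^2) * π^2 = Λ) (t : ℝ) (x : Fin n → ℝ) :
    deriv (fun s => sol n m Λ c F s x) t
      = ∑ i, deriv (deriv (fun z => sol n m Λ c F t (Function.update x i z))) (x i) := by
  -- time derivative
  have hK : HasDerivAt (fun s => sol n m Λ c F s x)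
      (-Λ * sol n m Λ c F t x) t := by
    have h1 : HasDerivAt (fun s : ℝ => Real.exp (-Λ * s)) (Real.exp (-Λ * t) * (-Λ)) t :=
      by simpa using ((hasDerivAt_id t).const_mul (-Λ)).exp
    have h2 := h1.mul_const (∑ j, c j * phi n (F j) x)
    have : -Λ * sol n m Λ c F t x
        = Real.exp (-Λ * t) * (-Λ) * (∑ j, c j * phi n (F j) x) := by
      rw [sol]; ring
    rw [this]
    exact h2
  rw [hK.deriv]
  -- spatial derivatives
  have hspace : ∀ i : Fin n,
      deriv (deriv (fun z => sol n m Λ c F t (Function.update x i z))) (x i)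
        = ∑ j, (Real.exp (-Λ * t) * c j * phi n (F j) x) * (-(((F j i : ℝ) * π)^2)) := by
    intro i
    have hfun : (fun z => sol n m Λ c F t (Function.update x i z))
        = fun z => ∑ j, (Real.exp (-Λ * t) * c j *
            ∏ i' ∈ Finset.univ.erase i, Real.sin ((F j i' : ℝ) * π * x i'))
          * Real.sin (((F j i : ℝ) * π) * z) := by
      funext z
      rw [sol, Finset.mul_sum]
      apply Finset.sum_congr rfl
      intro j _
      rw [phi]
      rw [← Finset.mul_prod_erase Finset.univ _ (Finset.mem_univ i)]
      rw [Function.update_self]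
      have : ∀ i' ∈ Finset.univ.erase i,
          Real.sin ((F j i' : ℝ) * π * Function.update x i z i')
            = Real.sin ((F j i' : ℝ) * π * x i') := by
        intro i' hi'
        rw [Function.update_of_ne (Finset.ne_of_mem_erase hi')]
      rw [Finset.prod_congr rfl this]
      ring
    rw [hfun, deriv2_sum_sin]
    apply Finset.sum_congr rfl
    intro j _
    have hphi : phi n (F j) x
        = Real.sin ((F j i : ℝ) * π * x i) *
          ∏ i' ∈ Finset.univ.erase i, Real.sin ((F j i' : ℝ) * π * x i') := by
      rw [phi, ← Finset.mul_prod_erase Finset.univ _ (Finset.mem_univ i)]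
    rw [hphi]; ring
  rw [Finset.sum_congr rfl (fun i _ => hspace i), Finset.sum_comm]
  have hj : ∀ j : Fin (m+1),
      (∑ i, (Real.exp (-Λ * t) * c j * phi n (F j) x) * (-(((F j i : ℝ) * π)^2)))
        = (-Λ) * (c j * phi n (F j) x) * Real.exp (-Λ * t) := by
    intro j
    rw [← Finset.mul_sum]
    have hsum : (∑ i, -(((F j i : ℝ) * π)^2)) = -Λ := by
      have h1 : ∀ i : Fin n, -(((F j i : ℝ) * π)^2) = -((F j i : ℝ)^2 * π^2) :=
        fun i => by ring
      rw [Finset.sum_congr rfl fun i _ => h1 i, ← hF j, Finset.sum_mul,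
        Finset.sum_neg_distrib]
    rw [hsum]; ring
  rw [Finset.sum_congr rfl fun j _ => hj j]
  rw [sol, Finset.mul_sum, Finset.mul_sum]
  exact Finset.sum_congr rfl fun j _ => by ring

end HeatAux

open Zsqrtd GaussianInt
namespace HeatAux
lemma exists_freqs (m : ℕ) : ∃ A B : ℕ → ℕ,
    (∀ j, j ≤ m → 1 ≤ A j ∧ 1 ≤ B j ∧ (A j)^2 + (B j)^2 = 5^(2*m+1)) ∧
    (∀ j, j ≤ m → ∀ k, k ≤ m → A j = A k → j = k) := by
  refine ⟨fun j => (gz (2*m+1) j).re.natAbs, fun j => (gz (2*m+1) j).im.natAbs,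
    ?_, fun j hj k hk h => gz_inj m j k hj hk h⟩
  intro j hj
  have hre := gz_re_ne m j hj
  have him := gz_im_ne m j hj
  have hn := gz_norm (2*m+1) j (by omega)
  have h1 : (gz (2*m+1) j).re^2 + (gz (2*m+1) j).im^2 = 5^(2*m+1) := by
    rw [← hn, Zsqrtd.norm_def]; ring
  refine ⟨Int.natAbs_pos.mpr hre, Int.natAbs_pos.mpr him, ?_⟩
  show ((gz (2*m+1) j).re.natAbs)^2 + ((gz (2*m+1) j).im.natAbs)^2 = 5^(2*m+1)
  have h2 : ((gz (2*m+1) j).re.natAbs : ℤ)^2 + ((gz (2*m+1) j).im.natAbs : ℤ)^2 = 5^(2*m+1) := by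
    rw [Int.natAbs_sq, Int.natAbs_sq]; exact h1
  exact_mod_cast h2
end HeatAux


open Set Real MeasureTheory

open HeatAux in
/-- The heat equation on the cube `(0,1)ⁿ`, `n ≥ 2`, with Dirichlet boundary conditions is not
observable at any time `T > 0` from a finite set `ω` of interior points: there is no `C > 0`
such that `‖u(T,·)‖_{L^∞} ≤ C ∫₀ᵀ sup_{x∈ω} |u(t,x)| dt` for all (smooth) solutions `u`. -/
theorem heat_not_observable_from_finite_set
    (n : ℕ) (hn : 2 ≤ n) (T : ℝ) (hT : 0 < T)
    (ω : Finset (Fin n → ℝ)) (hω : ∀ x ∈ ω, ∀ i, x i ∈ Ioo (0:ℝ) 1) :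
    ¬ ∃ C > (0:ℝ), ∀ u : ℝ → (Fin n → ℝ) → ℝ,
      -- regularity of the solution
      ContDiff ℝ (⊤ : ℕ∞) (fun p : ℝ × (Fin n → ℝ) => u p.1 p.2) →
      -- the heat equation `∂_t u = Δ u` in `(0,T) × (0,1)ⁿ`
      (∀ t ∈ Ioo (0:ℝ) T, ∀ x : Fin n → ℝ, (∀ i, x i ∈ Ioo (0:ℝ) 1) →
        deriv (fun s => u s x) t
          = ∑ i, deriv (deriv (fun z => u t (Function.update x i z))) (x i)) →
      -- Dirichlet boundary condition
      (∀ t ∈ Ioo (0:ℝ) T, ∀ x : Fin n → ℝ, (∀ i, x i ∈ Icc (0:ℝ) 1) →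
        (∃ i, x i = 0 ∨ x i = 1) → u t x = 0) →
      -- the observability inequality
      (⨆ x : {x : Fin n → ℝ // ∀ i, x i ∈ Icc (0:ℝ) 1}, |u T x.1|)
        ≤ C * ∫ t in (0:ℝ)..T, ⨆ x : ω, |u t x.1| := by
  rintro ⟨C, hC, hobs⟩
  obtain ⟨n', rfl⟩ : ∃ n', n = n' + 2 := ⟨n - 2, by omega⟩
  set m := ω.card with hm
  obtain ⟨A, B, hAB, hinj⟩ := exists_freqs m
  set F : Fin (m+1) → Fin (n'+2) → ℕ :=
    fun j i => if (i : ℕ) = 0 then A j else if (i : ℕ) = 1 then B j else 1 with hFdef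
  set Λ : ℝ := ((5:ℕ)^(2*m+1) + (n' : ℝ)) * π^2 with hΛ
  -- the frequencies all give the same eigenvalue
  have hFj : ∀ j : Fin (m+1), (∑ i, ((F j i : ℝ))^2) * π^2 = Λ := by
    intro j
    have hj : (j : ℕ) ≤ m := Nat.lt_succ_iff.mp j.isLt
    obtain ⟨hA1, hB1, hABsq⟩ := hAB j hj
    rw [hΛ]
    congr 1
    rw [Fin.sum_univ_succ, Fin.sum_univ_succ]
    have e0 : F j 0 = A (j : ℕ) := by simp [hFdef]
    have e1 : F j (Fin.succ 0) = B (j : ℕ) := by simp [hFdef]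
    have e2 : ∀ i : Fin n', F j (Fin.succ (Fin.succ i)) = 1 := by
      intro i; simp [hFdef, Fin.val_succ]
    have hcast : ((A (j:ℕ) : ℝ))^2 + ((B (j:ℕ) : ℝ))^2 = (5:ℝ)^(2*m+1) := by
      exact_mod_cast congrArg (Nat.cast : ℕ → ℝ) hABsq
    rw [e0, e1, Finset.sum_congr rfl fun i _ => by rw [e2 i]]
    rw [Finset.sum_const, Finset.card_univ, Fintype.card_fin]
    push_cast
    simp only [one_pow, nsmul_eq_mul, mul_one]
    linarith [hcast]
  -- choose coefficients vanishing on ω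
  let L : (Fin (m+1) → ℝ) →ₗ[ℝ] ({x // x ∈ ω} → ℝ) :=
    { toFun := fun c => fun w => ∑ j, c j * phi (n'+2) (F j) w.1
      map_add' := by
        intro a b; funext w; simp [add_mul, Finset.sum_add_distrib]
      map_smul' := by
        intro r a; funext w; simp [Finset.mul_sum, mul_assoc] }
  have hdim : Module.finrank ℝ ({x // x ∈ ω} → ℝ) < Module.finrank ℝ (Fin (m+1) → ℝ) := by
    simp only [Module.finrank_pi, Fintype.card_coe, Fintype.card_fin]
    omega
  obtain ⟨c, hcker, hc0⟩ := (Submodule.ne_bot_iff (LinearMap.ker L)).mp (LinearMap.ker_ne_bot_of_finrank_lt (f := L) hdim)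
  obtain ⟨j₀, hj₀⟩ := Function.ne_iff.mp hc0
  simp only [Pi.zero_apply] at hj₀
  have hψω : ∀ x ∈ ω, (∑ j, c j * phi (n'+2) (F j) x) = 0 := by
    intro x hx
    have h := congrFun (LinearMap.mem_ker.mp hcker) ⟨x, hx⟩
    simpa [L] using h
  set u := sol (n'+2) m Λ c F with hu
  have key := hobs u (sol_smooth _ _ _ _ _)
    (fun t _ x _ => sol_heat _ _ _ _ _ hFj t x)
    (fun t _ x _ hex => by obtain ⟨i, hi⟩ := hex; exact sol_bc _ _ _ _ _ t x i hi)
  -- the observation term vanishes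
  have hRHS : (∫ t in (0:ℝ)..T, ⨆ x : ω, |u t x.1|) = 0 := by
    have hz : ∀ t : ℝ, (⨆ x : ω, |u t x.1|) = 0 := by
      intro t
      have : ∀ x : ω, |u t x.1| = 0 := by
        intro x
        have : u t x.1 = 0 := by
          rw [hu, sol, hψω x.1 x.2, mul_zero]
        simp [this]
      calc (⨆ x : ω, |u t x.1|) = ⨆ _ : ω, (0:ℝ) := by
            congr 1; funext x; exact this x
        _ = 0 := Real.iSup_const_zero
    simp only [hz, intervalIntegral.integral_zero]
  rw [hRHS, mul_zero] at key
  -- find a point where the solution at time T does not vanish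
  have hj₀m : (j₀ : ℕ) ≤ m := Nat.lt_succ_iff.mp j₀.isLt
  obtain ⟨hA1, hB1, _⟩ := hAB j₀ hj₀m
  set y : ℝ := 1 / (2 * (B (j₀ : ℕ) : ℝ)) with hy
  have hBpos : (0:ℝ) < (B (j₀ : ℕ) : ℝ) := by exact_mod_cast hB1
  have hy_mem : y ∈ Icc (0:ℝ) 1 := by
    constructor
    · positivity
    · rw [hy]
      rw [div_le_one (by positivity)]
      have : (1:ℝ) ≤ (B (j₀ : ℕ) : ℝ) := by exact_mod_cast hB1
      linarith
  have hsinBy : Real.sin ((B (j₀ : ℕ) : ℝ) * π * y) = 1 := by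
    have : (B (j₀ : ℕ) : ℝ) * π * y = π / 2 := by
      rw [hy]; field_simp
    rw [this, Real.sin_pi_div_two]
  set d : Fin (m+1) → ℝ := fun j => c j * Real.sin ((B (j : ℕ) : ℝ) * π * y) with hd
  have hdj₀ : d j₀ = c j₀ := by rw [hd]; simp [hsinBy]
  set h : ℝ → ℝ := fun x => ∑ j, d j * Real.sin ((A (j : ℕ) : ℝ) * π * x) with hh
  have hint : (∫ x in (0:ℝ)..1, h x * Real.sin ((A (j₀ : ℕ) : ℝ) * π * x)) = d j₀ * (1/2) := by
    have hfun : (fun x => h x * Real.sin ((A (j₀ : ℕ) : ℝ) * π * x))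
        = fun x => ∑ j, d j * (Real.sin ((A (j : ℕ) : ℝ) * π * x) * Real.sin ((A (j₀ : ℕ) : ℝ) * π * x)) := by
      funext x; rw [hh]; rw [Finset.sum_mul]; exact Finset.sum_congr rfl fun j _ => by ring
    rw [hfun, intervalIntegral.integral_finset_sum (fun j _ =>
      (Continuous.intervalIntegrable (by fun_prop) 0 1))]
    have : ∀ j : Fin (m+1),
        (∫ x in (0:ℝ)..1, d j * (Real.sin ((A (j : ℕ) : ℝ) * π * x) * Real.sin ((A (j₀ : ℕ) : ℝ) * π * x)))
          = d j * (if A (j : ℕ) = A (j₀ : ℕ) then 1/2 else 0) := by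
      intro j
      rw [intervalIntegral.integral_const_mul,
        integral_sin_sin _ _ (hAB j (Nat.lt_succ_iff.mp j.isLt)).1 hA1]
    rw [Finset.sum_congr rfl fun j _ => this j]
    rw [Finset.sum_eq_single j₀]
    · rw [if_pos rfl]
    · intro j _ hjne
      rw [if_neg, mul_zero]
      intro hAeq
      exact hjne (Fin.ext (hinj _ (Nat.lt_succ_iff.mp j.isLt) _ hj₀m hAeq))
    · intro habs; exact absurd (Finset.mem_univ j₀) habs
  have hpoint : ∃ x₀ ∈ Icc (0:ℝ) 1, h x₀ ≠ 0 := by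
    by_contra hcon
    push_neg at hcon
    have hzero : (∫ x in (0:ℝ)..1, h x * Real.sin ((A (j₀ : ℕ) : ℝ) * π * x)) = 0 := by
      rw [intervalIntegral.integral_congr (g := fun _ => 0)]
      · simp
      · intro x hx
        rw [Set.uIcc_of_le (by norm_num : (0:ℝ) ≤ 1)] at hx
        simp [hcon x hx]
    rw [hint, hdj₀] at hzero
    exact hj₀ (by linarith)
  obtain ⟨x₀, hx₀mem, hx₀⟩ := hpoint
  set p : Fin (n'+2) → ℝ := fun i => if (i : ℕ) = 0 then x₀ else if (i : ℕ) = 1 then y else 1/2 with hp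
  have hpmem : ∀ i, p i ∈ Icc (0:ℝ) 1 := by
    intro i
    rw [hp]
    by_cases h0 : (i : ℕ) = 0
    · simpa [h0] using hx₀mem
    · by_cases h1 : (i : ℕ) = 1
      · simpa [h0, h1] using hy_mem
      · simp [h0, h1]; norm_num
  have hphip : ∀ j : Fin (m+1), phi (n'+2) (F j) p
      = Real.sin ((A (j : ℕ) : ℝ) * π * x₀) * Real.sin ((B (j : ℕ) : ℝ) * π * y) := by
    intro j
    rw [phi, Fin.prod_univ_succ, Fin.prod_univ_succ]
    have e0 : F j 0 = A (j : ℕ) := by simp [hFdef]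
    have e0p : p 0 = x₀ := by simp [hp]
    have e1 : F j (Fin.succ 0) = B (j : ℕ) := by simp [hFdef]
    have e1p : p (Fin.succ 0) = y := by simp [hp]
    have e2 : ∀ i : Fin n', Real.sin ((F j (Fin.succ (Fin.succ i)) : ℝ) * π * p (Fin.succ (Fin.succ i))) = 1 := by
      intro i
      have hF2 : F j (Fin.succ (Fin.succ i)) = 1 := by simp [hFdef, Fin.val_succ]
      have hp2 : p (Fin.succ (Fin.succ i)) = 1/2 := by simp [hp, Fin.val_succ]
      rw [hF2, hp2]
      norm_num
      rw [show π * (1/2 : ℝ) = π / 2 by ring]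
      exact Real.sin_pi_div_two
    rw [e0, e0p, e1, e1p, Finset.prod_congr rfl fun i _ => e2 i]
    simp
  have hup : u T p = Real.exp (-Λ * T) * h x₀ := by
    rw [hu, sol, hh]
    congr 1
    rw [Finset.sum_congr rfl fun j _ => by rw [hphip j]]
    exact Finset.sum_congr rfl fun j _ => by rw [hd]; ring
  have hune : u T p ≠ 0 := by
    rw [hup]
    exact mul_ne_zero (Real.exp_ne_zero _) hx₀
  -- bounded above
  have hΛ0 : 0 ≤ Λ := by rw [hΛ]; positivity
  have hbdd : BddAbove (Set.range fun x : {x : Fin (n'+2) → ℝ // ∀ i, x i ∈ Icc (0:ℝ) 1} => |u T x.1|) := by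
    refine ⟨∑ j, |c j|, ?_⟩
    rintro - ⟨x, rfl⟩
    simp only [hu, sol]
    rw [abs_mul, Real.abs_exp]
    calc Real.exp (-Λ * T) * |∑ j, c j * phi (n'+2) (F j) x.1|
        ≤ 1 * |∑ j, c j * phi (n'+2) (F j) x.1| := by
          apply mul_le_mul_of_nonneg_right _ (abs_nonneg _)
          rw [Real.exp_le_one_iff]
          nlinarith
      _ ≤ ∑ j, |c j| := by
          rw [one_mul]
          calc |∑ j, c j * phi (n'+2) (F j) x.1| ≤ ∑ j, |c j * phi (n'+2) (F j) x.1| :=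
                Finset.abs_sum_le_sum_abs _ _
            _ ≤ ∑ j, |c j| := by
                apply Finset.sum_le_sum
                intro j _
                rw [abs_mul]
                calc |c j| * |phi (n'+2) (F j) x.1| ≤ |c j| * 1 :=
                      mul_le_mul_of_nonneg_left (abs_phi_le_one _ _ _) (abs_nonneg _)
                  _ = |c j| := mul_one _
  have hle : |u T p| ≤ ⨆ x : {x : Fin (n'+2) → ℝ // ∀ i, x i ∈ Icc (0:ℝ) 1}, |u T x.1| :=
    le_ciSup hbdd ⟨p, hpmem⟩
  have : (0:ℝ) < |u T p| := abs_pos.mpr hune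
  linarith
end

section
/- Let f(τ) = C₆ exp(−γ/(10 τ^α)) with γ, C₆, α > 0 and let 0 < η < 1 with η^{−α} = 2. Suppose u : (0,T] → [0,∞) and g : (0,T] → [0,∞) (g integrable) satisfy, for every 0 < τ ≤ T, f(τ_elapsed) u(t₂) ≤ ∫_{t₁}^{t₂} g(s) ds + f(η τ_elapsed) u(t₁) whenever t₂ − t₁ = τ_elapsed. Then, defining T_0 = T and T_{k+1} = T_k − (1−η) η^k T, the telescoping sum yields f((1−η)T) u(T) ≤ ∫₀^T g(s) ds. -/
open Set MeasureTheory intervalIntegral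

/-- The abstract telescoping step of the Lebeau–Robbiano method: with
`f(τ) = C₆ exp(-γ/(10 τ^α))`, `η ∈ (0,1)` with `η^{-α} = 2`, and the one-step estimate
`f(τ) u(t₂) ≤ ∫_{t₁}^{t₂} g + f(ητ) u(t₁)` whenever `t₂ - t₁ = τ`, summing over the
dyadically shrinking intervals `[T_{k+1}, T_k]` (`T₀ = T`, `T_{k+1} = T_k - (1-η)η^k T`)
yields `f((1-η)T) u(T) ≤ ∫₀ᵀ g`. -/
theorem lebeau_robbiano_telescoping
    (T γ C₆ α η : ℝ) (hT : 0 < T) (hγ : 0 < γ) (hC₆ : 0 < C₆) (hα : 0 < α)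
    (hη₀ : 0 < η) (hη₁ : η < 1) (hηα : η ^ (-α) = 2)
    (f : ℝ → ℝ) (hf : ∀ τ : ℝ, f τ = C₆ * Real.exp (-(γ / (10 * τ ^ α))))
    (u g : ℝ → ℝ)
    (hu : ∀ t ∈ Ioc (0:ℝ) T, 0 ≤ u t) (hg : ∀ t ∈ Ioc (0:ℝ) T, 0 ≤ g t)
    (hgint : IntervalIntegrable g volume 0 T)
    (hubdd : ∃ B : ℝ, ∀ t ∈ Ioc (0:ℝ) T, u t ≤ B)
    (hrec : ∀ t₁ t₂ : ℝ, 0 < t₁ → t₁ < t₂ → t₂ ≤ T →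
      f (t₂ - t₁) * u t₂ ≤ (∫ s in t₁..t₂, g s) + f (η * (t₂ - t₁)) * u t₁) :
    f ((1 - η) * T) * u T ≤ ∫ s in (0:ℝ)..T, g s := by
  obtain ⟨B, hB⟩ := hubdd
  have hfpos : ∀ τ : ℝ, 0 < f τ := fun τ => by rw [hf]; positivity
  have h1η : 0 < 1 - η := by linarith
  have hTk_pos : ∀ N : ℕ, 0 < η ^ N * T := fun N => by positivity
  have hTk_le : ∀ N : ℕ, η ^ N * T ≤ T := fun N => by
    have h : η ^ N ≤ 1 := pow_le_one₀ hη₀.le hη₁.le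
    nlinarith
  have hsub : ∀ a b : ℝ, 0 ≤ a → a ≤ b → b ≤ T → IntervalIntegrable g volume a b := by
    intro a b ha hab hbT
    exact hgint.mono_set (by
      rw [Set.uIcc_of_le hab, Set.uIcc_of_le hT.le]
      exact Set.Icc_subset_Icc ha hbT)
  have key : ∀ N : ℕ, f ((1 - η) * T) * u T ≤
      (∫ s in (η ^ N * T)..T, g s) + f ((1 - η) * (η ^ N * T)) * u (η ^ N * T) := by
    intro N
    induction N with
    | zero => simp
    | succ N ih =>
      have hlt : η ^ (N + 1) * T < η ^ N * T := by
        have : η ^ (N + 1) < η ^ N := pow_lt_pow_right_of_lt_one₀ hη₀ hη₁ (by omega)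
        nlinarith
      have h1 := hrec (η ^ (N + 1) * T) (η ^ N * T) (hTk_pos (N + 1)) hlt (hTk_le N)
      rw [show η * (η ^ N * T - η ^ (N + 1) * T) = (1 - η) * (η ^ (N + 1) * T) by ring,
          show η ^ N * T - η ^ (N + 1) * T = (1 - η) * (η ^ N * T) by ring] at h1
      have hadd : (∫ s in (η ^ (N + 1) * T)..(η ^ N * T), g s) + ∫ s in (η ^ N * T)..T, g s
          = ∫ s in (η ^ (N + 1) * T)..T, g s :=
        integral_add_adjacent_intervals
          (hsub _ _ (hTk_pos (N + 1)).le hlt.le (hTk_le N)) (hsub _ _ (hTk_pos N).le (hTk_le N) le_rfl)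
      calc f ((1 - η) * T) * u T
          ≤ (∫ s in (η ^ N * T)..T, g s) + f ((1 - η) * (η ^ N * T)) * u (η ^ N * T) := ih
        _ ≤ (∫ s in (η ^ N * T)..T, g s) + ((∫ s in (η ^ (N + 1) * T)..(η ^ N * T), g s)
              + f ((1 - η) * (η ^ (N + 1) * T)) * u (η ^ (N + 1) * T)) := by linarith
        _ = (∫ s in (η ^ (N + 1) * T)..T, g s)
              + f ((1 - η) * (η ^ (N + 1) * T)) * u (η ^ (N + 1) * T) := by
            rw [← hadd]; ring
  have hbound : ∀ N : ℕ, f ((1 - η) * T) * u T ≤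
      (∫ s in (0:ℝ)..T, g s) + f ((1 - η) * (η ^ N * T)) * B := by
    intro N
    refine (key N).trans (add_le_add ?_ ?_)
    · have hsplit : (∫ s in (0:ℝ)..T, g s)
          = (∫ s in (0:ℝ)..(η ^ N * T), g s) + ∫ s in (η ^ N * T)..T, g s :=
        (integral_add_adjacent_intervals (hsub _ _ le_rfl (hTk_pos N).le (hTk_le N))
          (hsub _ _ (hTk_pos N).le (hTk_le N) le_rfl)).symm
      have hnn : 0 ≤ ∫ s in (0:ℝ)..(η ^ N * T), g s := by
        apply intervalIntegral.integral_nonneg_of_ae_restrict (hTk_pos N).le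
        rw [← Measure.restrict_congr_set Ioc_ae_eq_Icc]
        filter_upwards [ae_restrict_mem measurableSet_Ioc] with x hx
        exact hg x ⟨hx.1, hx.2.trans (hTk_le N)⟩
      linarith [hsplit]
    · exact mul_le_mul_of_nonneg_left (hB _ ⟨hTk_pos N, hTk_le N⟩) (hfpos _).le
  -- limit
  have hrpos : 0 < η ^ α := Real.rpow_pos_of_pos hη₀ α
  have hr1 : η ^ α < 1 := Real.rpow_lt_one hη₀.le hη₁ hα
  have hcpos : (0:ℝ) < ((1 - η) * T) ^ α := Real.rpow_pos_of_pos (by positivity) α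
  have harg : Filter.Tendsto (fun N : ℕ => γ / (10 * ((1 - η) * (η ^ N * T)) ^ α))
      Filter.atTop Filter.atTop := by
    have heq : ∀ N : ℕ, γ / (10 * ((1 - η) * (η ^ N * T)) ^ α)
        = (γ / (10 * ((1 - η) * T) ^ α)) * ((η ^ α)⁻¹) ^ N := by
      intro N
      have hpow : ((1 - η) * (η ^ N * T)) ^ α = ((1 - η) * T) ^ α * (η ^ α) ^ N := by
        rw [show (1 - η) * (η ^ N * T) = ((1 - η) * T) * η ^ N by ring,
            Real.mul_rpow (by positivity) (by positivity),
            ← Real.rpow_natCast η N, ← Real.rpow_natCast (η ^ α) N,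
            ← Real.rpow_mul hη₀.le, ← Real.rpow_mul hη₀.le, mul_comm α (N : ℝ)]
      rw [hpow, inv_pow, ← mul_assoc, div_mul_eq_div_div, div_eq_mul_inv]
    simp only [heq]
    exact Filter.Tendsto.const_mul_atTop (by positivity)
      (tendsto_pow_atTop_atTop_of_one_lt ((one_lt_inv₀ hrpos).mpr hr1))
  have hftend : Filter.Tendsto (fun N : ℕ => f ((1 - η) * (η ^ N * T))) Filter.atTop (nhds 0) := by
    simp only [hf]
    have := (Real.tendsto_exp_neg_atTop_nhds_zero.comp harg).const_mul C₆
    simpa using this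
  have htend : Filter.Tendsto (fun N : ℕ => (∫ s in (0:ℝ)..T, g s)
      + f ((1 - η) * (η ^ N * T)) * B) Filter.atTop (nhds (∫ s in (0:ℝ)..T, g s)) := by
    have := Filter.Tendsto.add (tendsto_const_nhds
      (x := ∫ s in (0:ℝ)..T, g s) (f := Filter.atTop (α := ℕ))) (hftend.mul_const B)
    simpa using this
  exact ge_of_tendsto' htend hbound
end

section
/- Let Ω ⊂ ℝⁿ be a bounded open set with Dirichlet Laplacian eigenvalues λ₁ < λ₂ ≤ ⋯ (λ₁ simple) and orthonormal eigenbasis (φ_{n,k}). Let ω ⊂ Ω and suppose a function of the form u(t,x) = Σ_{n,k} a_{n,k} e^{−λ_n t} φ_{n,k}(x) (with Σ|a_{n,k}|² < ∞) satisfies u(t,·)|_ω = 0 for all t > 0. If for each n the combination Σ_k a_{n,k} φ_{n,k} vanishing identically on ω implies Σ_k a_{n,k} φ_{n,k} = 0 (i.e. no nonzero eigenfunction vanishes identically on ω), then all a_{n,k} = 0, hence u ≡ 0. -/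
/-!
Grouping the terms of each eigenspace, `∑ₙ Aₙ e^{-λₙ t}` vanishes for every `t > 0`, where
`Aₙ(x) = ∑ₖ a_{n,k} φ_{n,k}(x)` for a fixed `x ∈ ω`. Such a Dirichlet series with strictly
increasing exponents has all coefficients zero: if `Aₙ = 0` for `n < m`, multiplying by
`e^{λₘ t}` and letting `t → ∞` (dominated convergence for series, the terms being bounded by
their values at `t = 1`) leaves `Aₘ = 0`. Hence each `∑ₖ a_{m,k} φ_{m,k}` vanishes on `ω`.
-/

open Filter Topology Real

theorem eq_zero_of_hasSum_mul_exp_neg_of_forall_lt_eq_zero {A lam : ℕ → ℝ} (hlam : StrictMono lam)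
    (h : ∀ t > 0, HasSum (fun n => A n * exp (-lam n * t)) 0) {m : ℕ}
    (hlow : ∀ n < m, A n = 0) : A m = 0 := by
  set F : ℝ → ℕ → ℝ := fun t n => A n * exp (-(lam n - lam m) * t)
  have hF : ∀ t > 0, HasSum (F t) 0 := fun t ht => by
    have hterm : F t = fun n => exp (lam m * t) * (A n * exp (-lam n * t)) := by
      funext n
      rw [mul_left_comm, ← exp_add]
      simp only [F]
      ring_nf
    simpa [hterm] using (h t ht).mul_left (exp (lam m * t))
  have hlim : ∀ n, Tendsto (F · n) atTop (𝓝 (if n = m then A m else 0)) := by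
    intro n
    rcases lt_trichotomy n m with hnm | rfl | hmn
    · simp [F, hlow n hnm, hnm.ne]
    · simp [F]
    · have hgap : 0 < lam n - lam m := sub_pos.mpr (hlam hmn)
      have hexp : Tendsto (fun t => exp (-(lam n - lam m) * t)) atTop (𝓝 0) :=
        tendsto_exp_atBot.comp (tendsto_id.const_mul_atTop_of_neg (neg_neg_of_pos hgap))
      simpa [F, hmn.ne'] using hexp.const_mul (A n)
  have hbound : ∀ᶠ t in atTop, ∀ n, ‖F t n‖ ≤ ‖F 1 n‖ := by
    filter_upwards [eventually_ge_atTop 1] with t ht n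
    rcases lt_or_ge n m with hnm | hmn
    · simp [F, hlow n hnm]
    · have hgap : 0 ≤ lam n - lam m := sub_nonneg.mpr (hlam.monotone hmn)
      simp only [F, norm_mul, norm_eq_abs, abs_exp]
      exact mul_le_mul_of_nonneg_left (exp_le_exp.mpr (by nlinarith)) (abs_nonneg _)
  have hsum := tendsto_tsum_of_dominated_convergence (hF 1 one_pos).summable.norm hlim hbound
  rw [tsum_ite_eq] at hsum
  refine tendsto_nhds_unique hsum (tendsto_const_nhds.congr' ?_)
  filter_upwards [eventually_gt_atTop 0] with t ht
  exact (hF t ht).tsum_eq.symm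

theorem eq_zero_of_hasSum_mul_exp_neg {A lam : ℕ → ℝ} (hlam : StrictMono lam)
    (h : ∀ t > 0, HasSum (fun n => A n * exp (-lam n * t)) 0) (n : ℕ) : A n = 0 := by
  induction n using Nat.strong_induction_on with
  | _ n ih => exact eq_zero_of_hasSum_mul_exp_neg_of_forall_lt_eq_zero hlam h ih

theorem eigenmode_coefficients_vanish_general
    (d : ℕ) (Ω ω : Set (Fin d → ℝ)) (hω : ω ⊆ Ω)
    (lam : ℕ → ℝ) (hlam : StrictMono lam)
    (μ : ℕ → ℕ)
    (φ : (m : ℕ) → Fin (μ m) → (Fin d → ℝ) → ℝ)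
    (a : (m : ℕ) → Fin (μ m) → ℝ)
    (hsum : ∀ t : ℝ, 0 < t → ∀ x ∈ Ω,
      Summable (fun p : Σ m : ℕ, Fin (μ m) =>
        a p.1 p.2 * Real.exp (-(lam p.1) * t) * φ p.1 p.2 x))
    (hvanish : ∀ t : ℝ, 0 < t → ∀ x ∈ ω,
      (∑' p : Σ m : ℕ, Fin (μ m), a p.1 p.2 * Real.exp (-(lam p.1) * t) * φ p.1 p.2 x) = 0)
    (hunique : ∀ m : ℕ, ∀ b : Fin (μ m) → ℝ,
      (∀ x ∈ ω, ∑ k, b k * φ m k x = 0) → ∀ k, b k = 0) :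
    ∀ m k, a m k = 0 := by
  intro m
  refine hunique m (a m) fun x hx => ?_
  refine eq_zero_of_hasSum_mul_exp_neg (A := fun n => ∑ k, a n k * φ n k x) hlam
    (fun t ht => ?_) m
  have hsigma := (hsum t ht x (hω hx)).hasSum
  rw [hvanish t ht x hx] at hsigma
  convert hsigma.sigma fun n => hasSum_fintype _ using 2 with n
  rw [Finset.sum_mul]
  exact Finset.sum_congr rfl fun k _ => by ring

/-- The key step for approximate observability: if a heat solution
`u(t,x) = ∑_{n,k} a_{n,k} e^{-λ_n t} φ_{n,k}(x)` (square-summable coefficients,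
eigenvalues `λ₀ < λ₁ < ⋯ → ∞` with the first eigenvalue simple) vanishes on `ω` for all
`t > 0`, and no nonzero linear combination within one eigenspace vanishes identically
on `ω`, then all coefficients `a_{n,k}` vanish. -/
theorem eigenmode_coefficients_vanish
    (d : ℕ) (Ω ω : Set (Fin d → ℝ)) (hω : ω ⊆ Ω)
    (lam : ℕ → ℝ) (hlam : StrictMono lam) (hlamtop : Tendsto lam atTop atTop)
    (μ : ℕ → ℕ) (hμ₀ : μ 0 = 1)
    (φ : (m : ℕ) → Fin (μ m) → (Fin d → ℝ) → ℝ)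
    (a : (m : ℕ) → Fin (μ m) → ℝ)
    (ha : Summable (fun p : Σ m : ℕ, Fin (μ m) => (a p.1 p.2) ^ 2))
    (hsum : ∀ t : ℝ, 0 < t → ∀ x ∈ Ω,
      Summable (fun p : Σ m : ℕ, Fin (μ m) =>
        a p.1 p.2 * Real.exp (-(lam p.1) * t) * φ p.1 p.2 x))
    (hvanish : ∀ t : ℝ, 0 < t → ∀ x ∈ ω,
      (∑' p : Σ m : ℕ, Fin (μ m), a p.1 p.2 * Real.exp (-(lam p.1) * t) * φ p.1 p.2 x) = 0)
    (hunique : ∀ m : ℕ, ∀ b : Fin (μ m) → ℝ,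
      (∀ x ∈ ω, ∑ k, b k * φ m k x = 0) → ∀ k, b k = 0) :
    ∀ m k, a m k = 0 :=
  eigenmode_coefficients_vanish_general d Ω ω hω lam hlam μ φ a hsum hvanish hunique
end
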